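/- arXiv:1411.2114 — 4 statements merged into one kernel-verified Lean document; each statement's English description precedes it below -/
import Mathlib

section
/- For p ∈ {0, −1/2} and λ ∈ ℂ, the non-stationary subdivision scheme {S_{h_p^{[k]}}, k ≥ 0} with k-level symbol h_p^{[k]}(z) = r_k^{−p}(1+r_k^{−1}z)(1+r_k z)/((r_k^{−1}+r_k)z), r_k = e^{λ2^{−k−1}}, is C⁰-convergent, and its family of basic limit functions {H_{m,p}, m ≥ 0} is stable: there exist constants 0 < C₁ ≤ C₂ such that C₁‖c‖ ≤ ‖Σ_{i∈ℤ} c_i H_{m,p}(·−i)‖ ≤ C₂‖c‖ for all m ≥ 0 and all c ∈ ℓ∞(ℤ). Moreover, when p = 0 the scheme is interpolatory, i.e., (S_{h_0^{[k]}} f)_{2i} = f_i for all bounded sequences f, all i ∈ ℤ and all k ≥ 0. -/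
open Filter Topology

noncomputable section

/-- Subdivision operator with real mask acting on complex-valued sequences. -/
def subOpC (a : ℤ → ℝ) (f : ℤ → ℂ) : ℤ → ℂ :=
  fun i => ∑ᶠ j : ℤ, (a (i - 2 * j) : ℂ) * f j

/-- Subdivision operator with real mask acting on real-valued sequences. -/
def subOpR (a : ℤ → ℝ) (f : ℤ → ℝ) : ℤ → ℝ :=
  fun i => ∑ᶠ j : ℤ, a (i - 2 * j) * f j

/-- `subIterC a m k f = S_{a^{[m+k-1]}} ⋯ S_{a^{[m]}} f` (complex data). -/
def subIterC (a : ℕ → ℤ → ℝ) (m : ℕ) : ℕ → (ℤ → ℂ) → ℤ → ℂ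
  | 0, f => f
  | k + 1, f => subOpC (a (m + k)) (subIterC a m k f)

/-- `subIterR a m k f = S_{a^{[m+k-1]}} ⋯ S_{a^{[m]}} f` (real data). -/
def subIterR (a : ℕ → ℤ → ℝ) (m : ℕ) : ℕ → (ℤ → ℝ) → ℤ → ℝ
  | 0, f => f
  | k + 1, f => subOpR (a (m + k)) (subIterR a m k f)

/-- The symbol `a(z) = Σ_i a_i z^i` of a mask, as a function of `z ∈ ℂ`. -/
def symbol (a : ℤ → ℝ) (z : ℂ) : ℂ := ∑ᶠ i : ℤ, (a i : ℂ) * z ^ i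

/-- The `β`-th derivative of the symbol of a mask:
`(d^β a/dz^β)(z) = Σ_i a_i · i(i−1)⋯(i−β+1) · z^{i−β}`. -/
def symbolDeriv (a : ℤ → ℝ) (β : ℕ) (z : ℂ) : ℂ :=
  ∑ᶠ i : ℤ, (a i : ℂ) * (∏ l ∈ Finset.range β, ((i : ℂ) - (l : ℂ))) * z ^ (i - (β : ℤ))

/-- A bounded complex sequence. -/
def BddSeqC (f : ℤ → ℂ) : Prop := ∃ C : ℝ, ∀ i : ℤ, ‖f i‖ ≤ C

/-- A bounded real sequence. -/
def BddSeqR (f : ℤ → ℝ) : Prop := ∃ C : ℝ, ∀ i : ℤ, |f i| ≤ C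

/-- The non-stationary scheme with masks `a` is `C^ℓ`-convergent. -/
def IsClConvergent (a : ℕ → ℤ → ℝ) (l : ℕ) : Prop :=
  ∀ f₀ : ℤ → ℝ, BddSeqR f₀ → ∃ g : ℝ → ℝ, ContDiff ℝ l g ∧
    ∀ ε > (0 : ℝ), ∃ K : ℕ, ∀ k ≥ K, ∀ i : ℤ,
      |g ((i : ℝ) / 2 ^ k) - subIterR a 0 k f₀ i| < ε

/-- The `N`-dimensional space of exponential polynomials
`Φ_N = span{x^β e^{λ_n x} : β = 0,…,μ_n−1, n = 1,…,η}`. -/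
def expPolySpace (η : ℕ) (lam : Fin η → ℂ) (mu : Fin η → ℕ) : Submodule ℂ (ℝ → ℂ) :=
  Submodule.span ℂ
    {f : ℝ → ℂ | ∃ n : Fin η, ∃ β : ℕ, β < mu n ∧
      f = fun x : ℝ => (x : ℂ) ^ β * Complex.exp (lam n * x)}

/-- The scheme reproduces the function `f : ℝ → ℂ` with respect to the shift parameter `p`,
i.e. starting from `f_i^{[0]} = f(i+p)` one has `sup_i |f_i^{[k]} − f((i+p)/2^k)| → 0`. -/
def Reproduces (a : ℕ → ℤ → ℝ) (f : ℝ → ℂ) (p : ℝ) : Prop :=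
  ∀ ε > (0 : ℝ), ∃ K : ℕ, ∀ k ≥ K, ∀ i : ℤ,
    ‖subIterC a 0 k (fun j : ℤ => f ((j : ℝ) + p)) i - f (((i : ℝ) + p) / 2 ^ k)‖ < ε

/-- The scheme is `Φ`-reproducing w.r.t. the shift parameter `p`. -/
def IsReproducing (a : ℕ → ℤ → ℝ) (Φ : Submodule ℂ (ℝ → ℂ)) (p : ℝ) : Prop :=
  ∀ f : ℝ → ℂ, f ∈ Φ → Reproduces a f p

/-- The scheme is `Φ`-generating w.r.t. the shift parameter `p`: data sampled from `f ∈ Φ`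
produce a limit function belonging to `Φ`. -/
def IsGenerating (a : ℕ → ℤ → ℝ) (Φ : Submodule ℂ (ℝ → ℂ)) (p : ℝ) : Prop :=
  ∀ f : ℝ → ℂ, f ∈ Φ → ∃ g : ℝ → ℂ, g ∈ Φ ∧
    ∀ ε > (0 : ℝ), ∃ K : ℕ, ∀ k ≥ K, ∀ i : ℤ,
      ‖g (((i : ℝ) + p) / 2 ^ k) - subIterC a 0 k (fun j : ℤ => f ((j : ℝ) + p)) i‖ < ε

/-- The Wronskian matrix `W_Φ(x)` with entries `(1/β!)·(d^β φ_α/dx^β)(x)`. -/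
def wronskian (N : ℕ) (φ : Fin N → ℝ → ℂ) (x : ℝ) : Matrix (Fin N) (Fin N) ℂ :=
  fun α β => (Nat.factorial (β : ℕ) : ℂ)⁻¹ * iteratedDeriv (β : ℕ) (φ α) x

/-- The non-stationary scheme with masks `a` is asymptotically similar to the
stationary scheme with mask `b`: `‖a^{[k]} − b‖_∞ → 0`. -/
def AsympSimilar (a : ℕ → ℤ → ℝ) (b : ℤ → ℝ) : Prop :=
  Tendsto (fun k : ℕ => ⨆ i : ℤ, |a k i - b i|) atTop (nhds 0)

/-- Approximate sum rules of order `N`. -/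
def ApproxSumRules (a : ℕ → ℤ → ℝ) (N : ℕ) : Prop :=
  Summable (fun k : ℕ => ‖symbol (a k) 1 - 2‖) ∧
  Summable (fun k : ℕ => (2 : ℝ) ^ (k * (N - 1)) *
    ⨆ β : Fin N, (2 : ℝ) ^ (-(k * (β : ℕ) : ℤ)) * ‖symbolDeriv (a k) (β : ℕ) (-1)‖)


/-- Subdivision operator with a complex mask acting on complex-valued sequences. -/
def subOpCC (a : ℤ → ℂ) (f : ℤ → ℂ) : ℤ → ℂ :=
  fun i => ∑ᶠ j : ℤ, a (i - 2 * j) * f j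

/-- `subIterCC a m k f = S_{a^{[m+k-1]}} ⋯ S_{a^{[m]}} f` (complex masks and data). -/
def subIterCC (a : ℕ → ℤ → ℂ) (m : ℕ) : ℕ → (ℤ → ℂ) → ℤ → ℂ
  | 0, f => f
  | k + 1, f => subOpCC (a (m + k)) (subIterCC a m k f)

/-- The delta sequence `δ = (δ_{i,0})_{i∈ℤ}` with complex values. -/
def deltaC : ℤ → ℂ := fun i => if i = 0 then 1 else 0

/-- The mask of the auxiliary symbol
`h_p^{[k]}(z) = r_k^{−p}(1+r_k^{−1}z)(1+r_k z)/((r_k^{−1}+r_k)z)`, `r_k = e^{λ2^{−k−1}}`,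
with entries `r_k^{−p}/(r_k^{−1}+r_k), r_k^{−p}, r_k^{−p}/(r_k^{−1}+r_k)` at positions
`−1, 0, 1` (here `r_k^{−p} := e^{−pλ2^{−k−1}}`). -/
def hMask (p : ℝ) (lam : ℂ) (k : ℕ) : ℤ → ℂ := fun i =>
  if i = 0 then Complex.exp (-(p : ℂ) * lam * (2 : ℂ) ^ (-(k : ℤ) - 1))
  else if i = 1 ∨ i = -1 then
    Complex.exp (-(p : ℂ) * lam * (2 : ℂ) ^ (-(k : ℤ) - 1)) /
      ((Complex.exp (lam * (2 : ℂ) ^ (-(k : ℤ) - 1)))⁻¹ +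
        Complex.exp (lam * (2 : ℂ) ^ (-(k : ℤ) - 1)))
  else 0

namespace SubdAux

/-- basic sinh/cosh estimates -/
lemma norm_sinh_le {z : ℂ} (h : ‖z‖ ≤ 1) : ‖Complex.sinh z‖ ≤ 2 * ‖z‖ := by
  have hs : Complex.sinh z = ((Complex.exp z - 1) - (Complex.exp (-z) - 1)) / 2 := by
    unfold Complex.sinh; ring
  rw [hs]
  have h1 : ‖Complex.exp z - 1‖ ≤ 2 * ‖z‖ := by
    simpa using Complex.norm_exp_sub_one_le (x := z) (by simpa using h)
  have h2 : ‖Complex.exp (-z) - 1‖ ≤ 2 * ‖z‖ := by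
    have := Complex.norm_exp_sub_one_le (x := -z) (by simpa using h)
    simpa using this
  calc ‖((Complex.exp z - 1) - (Complex.exp (-z) - 1)) / 2‖
      = ‖(Complex.exp z - 1) - (Complex.exp (-z) - 1)‖ / 2 := by
        rw [norm_div]; norm_num
    _ ≤ (‖Complex.exp z - 1‖ + ‖Complex.exp (-z) - 1‖) / 2 := by
        gcongr; exact norm_sub_le _ _
    _ ≤ (2 * ‖z‖ + 2 * ‖z‖) / 2 := by gcongr
    _ = 2 * ‖z‖ := by ring

lemma norm_sinh_sub_le {z : ℂ} (h : ‖z‖ ≤ 1) : ‖Complex.sinh z - z‖ ≤ ‖z‖ ^ 2 := by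
  have hs : Complex.sinh z - z =
      ((Complex.exp z - 1 - z) - (Complex.exp (-z) - 1 - (-z))) / 2 := by
    unfold Complex.sinh; ring
  rw [hs]
  have h1 : ‖Complex.exp z - 1 - z‖ ≤ ‖z‖ ^ 2 := by
    have := Complex.norm_exp_sub_one_sub_id_le (x := z) (by simpa using h)
    simpa using this
  have h2 : ‖Complex.exp (-z) - 1 - (-z)‖ ≤ ‖z‖ ^ 2 := by
    have := Complex.norm_exp_sub_one_sub_id_le (x := -z) (by simpa using h)
    simpa using this
  calc ‖((Complex.exp z - 1 - z) - (Complex.exp (-z) - 1 - (-z))) / 2‖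
      ≤ (‖Complex.exp z - 1 - z‖ + ‖Complex.exp (-z) - 1 - (-z)‖) / 2 := by
        rw [norm_div]; simp only [Complex.norm_ofNat]
        gcongr; exact norm_sub_le _ _
    _ ≤ (‖z‖^2 + ‖z‖^2) / 2 := by gcongr
    _ = ‖z‖ ^ 2 := by ring

lemma norm_sinh_ge {z : ℂ} (h : ‖z‖ ≤ 1/2) : ‖z‖ / 2 ≤ ‖Complex.sinh z‖ := by
  have h1 : ‖Complex.sinh z - z‖ ≤ ‖z‖ ^ 2 := norm_sinh_sub_le (by linarith)
  have h2 : ‖z‖ - ‖Complex.sinh z‖ ≤ ‖z‖ ^ 2 := by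
    have := norm_sub_norm_le z (Complex.sinh z)
    calc ‖z‖ - ‖Complex.sinh z‖ ≤ ‖z - Complex.sinh z‖ := norm_sub_norm_le _ _
      _ = ‖Complex.sinh z - z‖ := by rw [norm_sub_rev]
      _ ≤ ‖z‖ ^ 2 := h1
  nlinarith [norm_nonneg z, norm_nonneg (Complex.sinh z)]

lemma sinh_ne_zero_of_small {z : ℂ} (h : ‖z‖ ≤ 1/2) (hz : z ≠ 0) : Complex.sinh z ≠ 0 := by
  have := norm_sinh_ge h
  have hz' : 0 < ‖z‖ := norm_pos_iff.mpr hz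
  intro h0
  rw [h0, norm_zero] at this
  linarith

lemma norm_cosh_sub_one_le {z : ℂ} (h : ‖z‖ ≤ 1) : ‖Complex.cosh z - 1‖ ≤ ‖z‖ ^ 2 := by
  have hs : Complex.cosh z - 1 =
      ((Complex.exp z - 1 - z) + (Complex.exp (-z) - 1 - (-z))) / 2 := by
    unfold Complex.cosh; ring
  rw [hs]
  have h1 : ‖Complex.exp z - 1 - z‖ ≤ ‖z‖ ^ 2 := by
    have := Complex.norm_exp_sub_one_sub_id_le (x := z) (by simpa using h)
    simpa using this
  have h2 : ‖Complex.exp (-z) - 1 - (-z)‖ ≤ ‖z‖ ^ 2 := by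
    have := Complex.norm_exp_sub_one_sub_id_le (x := -z) (by simpa using h)
    simpa using this
  calc ‖((Complex.exp z - 1 - z) + (Complex.exp (-z) - 1 - (-z))) / 2‖
      ≤ (‖Complex.exp z - 1 - z‖ + ‖Complex.exp (-z) - 1 - (-z)‖) / 2 := by
        rw [norm_div]; simp only [Complex.norm_ofNat]
        gcongr; exact norm_add_le _ _
    _ ≤ (‖z‖^2 + ‖z‖^2) / 2 := by gcongr
    _ = ‖z‖ ^ 2 := by ring

lemma cosh_ne_zero_of_small {z : ℂ} (h : ‖z‖ ≤ 1/2) : Complex.cosh z ≠ 0 := by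
  have h1 : ‖Complex.cosh z - 1‖ ≤ ‖z‖ ^ 2 := norm_cosh_sub_one_le (by linarith)
  intro h0
  rw [h0] at h1
  simp only [zero_sub, norm_neg, norm_one] at h1
  nlinarith [norm_nonneg z]


def Gf (ν : ℂ) (x : ℝ) : ℂ :=
  if ν = 0 then ((max 0 (1 - |x|) : ℝ) : ℂ)
  else Complex.sinh (ν * ((max 0 (1 - |x|) : ℝ) : ℂ)) / Complex.sinh ν

lemma Gf_neg (ν : ℂ) (x : ℝ) : Gf ν (-x) = Gf ν x := by simp [Gf, abs_neg]

lemma Gf_of_one_le (ν : ℂ) {x : ℝ} (h : 1 ≤ |x|) : Gf ν x = 0 := by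
  have hm : max 0 (1 - |x|) = 0 := max_eq_left (by linarith)
  simp [Gf, hm]

lemma Gf_zero (ν : ℂ) (h : ν = 0 ∨ Complex.sinh ν ≠ 0) : Gf ν 0 = 1 := by
  rcases h with h | h
  · simp [Gf, h]
  · have hν : ν ≠ 0 := by rintro rfl; simp at h
    simp [Gf, hν, div_self h]

lemma Gf_norm_le (ν : ℂ) (hν : ‖ν‖ ≤ 1/2) (x : ℝ) : ‖Gf ν x‖ ≤ 4 := by
  have hs0 : (0:ℝ) ≤ max 0 (1 - |x|) := le_max_left _ _
  have hs1 : max 0 (1 - |x|) ≤ 1 := by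
    apply max_le (by norm_num); have := abs_nonneg x; linarith
  by_cases h0 : ν = 0
  · simp only [Gf, if_pos h0, Complex.norm_real, Real.norm_eq_abs]
    rw [abs_of_nonneg hs0]; linarith
  · simp only [Gf, if_neg h0]
    have hnum : ‖Complex.sinh (ν * ((max 0 (1 - |x|) : ℝ) : ℂ))‖ ≤ 2 * ‖ν‖ := by
      have harg : ‖ν * ((max 0 (1 - |x|):ℝ):ℂ)‖ ≤ ‖ν‖ := by
        rw [norm_mul, Complex.norm_real, Real.norm_of_nonneg hs0]
        nlinarith [norm_nonneg ν]
      calc ‖Complex.sinh (ν * ((max 0 (1 - |x|):ℝ):ℂ))‖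
          ≤ 2 * ‖ν * ((max 0 (1 - |x|):ℝ):ℂ)‖ := norm_sinh_le (by linarith)
        _ ≤ 2 * ‖ν‖ := by linarith
    have hden : ‖ν‖ / 2 ≤ ‖Complex.sinh ν‖ := norm_sinh_ge hν
    have hν0 : 0 < ‖ν‖ := norm_pos_iff.mpr h0
    rw [norm_div, div_le_iff₀ (by linarith)]
    nlinarith

lemma Gf_continuous (ν : ℂ) : Continuous (Gf ν) := by
  have hc : Continuous fun x : ℝ => ((max 0 (1 - |x|) : ℝ) : ℂ) :=
    Complex.continuous_ofReal.comp (continuous_const.max (continuous_const.sub continuous_abs))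
  unfold Gf
  split_ifs with h
  · exact hc
  · exact (Complex.continuous_sinh.comp (continuous_const.mul hc)).div_const _

/-- the key three-term identity, positive case -/
lemma Gf_step_pos (ν : ℂ) {h x : ℝ} (hh : 0 < h)
    (hx : ∃ M : ℤ, 0 ≤ M ∧ x = (2 * (M:ℝ) + 1) * h)
    (hE : ∃ n : ℤ, Even n ∧ (n : ℝ) * h = 1) :
    Gf ν (x - h) + Gf ν (x + h) = 2 * Complex.cosh (ν * (h : ℂ)) * Gf ν x := by
  obtain ⟨M, hM0, rfl⟩ := hx
  have hM0' : (0:ℝ) ≤ (M:ℝ) := by exact_mod_cast hM0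
  have hxh : 0 ≤ (2 * (M:ℝ) + 1) * h - h := by nlinarith
  have hxpos : 0 < (2 * (M:ℝ) + 1) * h := by nlinarith
  set x := (2 * (M:ℝ) + 1) * h with hxdef
  rcases le_or_gt (x + h) 1 with hA | hA
  · -- all three points in [0,1]
    have hx1 : x ≤ 1 := by linarith
    have hxh1 : x - h ≤ 1 := by linarith
    have e1 : max 0 (1 - |x - h|) = 1 - (x - h) := by
      rw [abs_of_nonneg hxh]; exact max_eq_right (by linarith)
    have e2 : max 0 (1 - |x + h|) = 1 - (x + h) := by
      rw [abs_of_nonneg (by linarith)]; exact max_eq_right (by linarith)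
    have e3 : max 0 (1 - |x|) = 1 - x := by
      rw [abs_of_nonneg (by linarith)]; exact max_eq_right (by linarith)
    by_cases h0 : ν = 0
    · simp only [Gf, if_pos h0, e1, e2, e3, h0, zero_mul, Complex.cosh_zero, mul_one]
      push_cast; ring
    · simp only [Gf, if_neg h0, e1, e2, e3]
      rw [← add_div, ← mul_div_assoc]
      congr 1
      have r1 : ((1 - (x - h) : ℝ) : ℂ) = ((1 - x : ℝ) : ℂ) + (h : ℂ) := by push_cast; ring
      have r2 : ((1 - (x + h) : ℝ) : ℂ) = ((1 - x : ℝ) : ℂ) - (h : ℂ) := by push_cast; ring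
      rw [r1, r2, mul_add, mul_sub, Complex.sinh_add, Complex.sinh_sub]
      ring
  · rcases le_or_gt 1 (x - h) with hB | hB
    · rw [Gf_of_one_le ν (by rw [abs_of_nonneg hxh]; linarith),
          Gf_of_one_le ν (by rw [abs_of_nonneg (by linarith)]; linarith),
          Gf_of_one_le ν (by rw [abs_of_nonneg (le_of_lt hxpos)]; linarith)]
      ring
    · exfalso
      obtain ⟨n, hn, hnh⟩ := hE
      have hxm : x - h = (2*(M:ℝ))*h := by rw [hxdef]; ring
      have hxp : x + h = (2*(M:ℝ)+2)*h := by rw [hxdef]; ring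
      have h1 : (2 * (M:ℝ)) * h < (n : ℝ) * h := by rw [hnh]; linarith
      have h2 : (n : ℝ) * h < (2 * (M:ℝ) + 2) * h := by rw [hnh]; linarith
      have i1' : 2 * M < n := by
        have := (mul_lt_mul_iff_left₀ hh).mp h1; exact_mod_cast this
      have i2' : n < 2 * M + 2 := by
        have := (mul_lt_mul_iff_left₀ hh).mp h2; exact_mod_cast this
      have : n = 2 * M + 1 := by omega
      rw [this] at hn
      exact (Int.even_add_one.mp hn) (even_two_mul M)

lemma Gf_step (ν : ℂ) {h x : ℝ} (hh : 0 < h)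
    (hx : ∃ M : ℤ, x = (2 * (M:ℝ) + 1) * h)
    (hE : ∃ n : ℤ, Even n ∧ (n : ℝ) * h = 1) :
    Gf ν (x - h) + Gf ν (x + h) = 2 * Complex.cosh (ν * (h : ℂ)) * Gf ν x := by
  obtain ⟨M, rfl⟩ := hx
  rcases le_or_gt 0 M with hM | hM
  · exact Gf_step_pos ν hh ⟨M, hM, rfl⟩ hE
  · have key := Gf_step_pos ν hh ⟨-M - 1, by omega, rfl⟩ hE
    have e0 : (2 * ((-M - 1 : ℤ) : ℝ) + 1) * h = -((2 * (M:ℝ) + 1) * h) := by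
      push_cast; ring
    have e1 : (2 * ((-M - 1 : ℤ) : ℝ) + 1) * h - h = -((2 * (M:ℝ) + 1) * h + h) := by
      push_cast; ring
    have e2 : (2 * ((-M - 1 : ℤ) : ℝ) + 1) * h + h = -((2 * (M:ℝ) + 1) * h - h) := by
      push_cast; ring
    rw [e1, e2, e0, Gf_neg, Gf_neg, Gf_neg] at key
    rw [add_comm]
    exact key


def win (x : ℝ) : Finset ℤ := Finset.Icc (⌊x⌋ - 1) (⌊x⌋ + 2)

def Phi (ν : ℂ) (f : ℤ → ℂ) (x : ℝ) : ℂ := ∑ j ∈ win x, f j * Gf ν (x - (j : ℝ))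

lemma term_zero_of_not_win (ν : ℂ) (f : ℤ → ℂ) (x : ℝ) {j : ℤ} (hj : j ∉ win x) :
    f j * Gf ν (x - (j : ℝ)) = 0 := by
  rw [win, Finset.mem_Icc, not_and_or] at hj
  have h1 : 1 ≤ |x - (j:ℝ)| := by
    rcases hj with hj | hj
    · push_neg at hj
      have : j ≤ ⌊x⌋ - 2 := by omega
      have hc : (j:ℝ) ≤ (⌊x⌋:ℝ) - 2 := by exact_mod_cast this
      have := Int.floor_le x
      rw [abs_of_nonneg (by linarith)]
      linarith
    · push_neg at hj
      have : ⌊x⌋ + 3 ≤ j := by omega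
      have hc : (⌊x⌋:ℝ) + 3 ≤ (j:ℝ) := by exact_mod_cast this
      have := Int.lt_floor_add_one x
      rw [abs_of_nonpos (by linarith)]
      linarith
  rw [Gf_of_one_le ν h1, mul_zero]

lemma Phi_eq_sum (ν : ℂ) (f : ℤ → ℂ) (x : ℝ) {s : Finset ℤ} (hs : win x ⊆ s) :
    Phi ν f x = ∑ j ∈ s, f j * Gf ν (x - (j : ℝ)) :=
  Finset.sum_subset hs (fun j _ hj => term_zero_of_not_win ν f x hj)

lemma Phi_int (ν : ℂ) (hν : ν = 0 ∨ Complex.sinh ν ≠ 0) (f : ℤ → ℂ) (i : ℤ) :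
    Phi ν f ((i : ℝ)) = f i := by
  have hw : win ((i:ℝ)) = Finset.Icc (i - 1) (i + 2) := by
    rw [win, Int.floor_intCast]
  have hset : Finset.Icc (i - 1) (i + 2) = {i - 1, i, i + 1, i + 2} := by
    ext j; simp [Finset.mem_Icc, Finset.mem_insert]; omega
  rw [Phi, hw, hset]
  rw [Finset.sum_insert (by simp only [Finset.mem_insert, Finset.mem_singleton]; omega),
      Finset.sum_insert (by simp only [Finset.mem_insert, Finset.mem_singleton]; omega),
      Finset.sum_insert (by simp only [Finset.mem_singleton]; omega), Finset.sum_singleton]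
  have g1 : Gf ν ((i:ℝ) - ((i - 1 : ℤ):ℝ)) = 0 := by
    apply Gf_of_one_le; push_cast; norm_num
  have g2 : Gf ν ((i:ℝ) - ((i:ℤ):ℝ)) = 1 := by
    rw [sub_self]; exact Gf_zero ν hν
  have g3 : Gf ν ((i:ℝ) - ((i + 1 : ℤ):ℝ)) = 0 := by
    apply Gf_of_one_le; push_cast; rw [abs_of_nonpos (by linarith)]; norm_num
  have g4 : Gf ν ((i:ℝ) - ((i + 2 : ℤ):ℝ)) = 0 := by
    apply Gf_of_one_le; push_cast; rw [abs_of_nonpos (by linarith)]; norm_num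
  rw [g1, g2, g3, g4]
  ring

lemma Phi_norm_le (ν : ℂ) (f : ℤ → ℂ) (x : ℝ) {C : ℝ} (hf : ∀ j, ‖f j‖ ≤ C)
    (hν : ‖ν‖ ≤ 1/2) : ‖Phi ν f x‖ ≤ 4 * (4 * C) := by
  have hC : 0 ≤ C := le_trans (norm_nonneg _) (hf 0)
  calc ‖Phi ν f x‖ ≤ ∑ j ∈ win x, ‖f j * Gf ν (x - (j:ℝ))‖ := norm_sum_le _ _
    _ ≤ ∑ _j ∈ win x, C * 4 := by
        apply Finset.sum_le_sum
        intro j _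
        rw [norm_mul]
        exact mul_le_mul (hf j) (Gf_norm_le ν hν _) (norm_nonneg _) hC
    _ = (win x).card * (C * 4) := by rw [Finset.sum_const, nsmul_eq_mul]
    _ ≤ 4 * (4 * C) := by
        have : (win x).card = 4 := by
          rw [win, Int.card_Icc]
          omega
        rw [this]; push_cast; nlinarith
lemma Phi_step (ν : ℂ) (f : ℤ → ℂ) {h x : ℝ} (hh : 0 < h)
    (hx : ∃ M : ℤ, x = (2 * (M:ℝ) + 1) * h)
    (hE : ∃ n : ℤ, Even n ∧ (n : ℝ) * h = 1) :
    Phi ν f (x - h) + Phi ν f (x + h) = 2 * Complex.cosh (ν * (h : ℂ)) * Phi ν f x := by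
  obtain ⟨n, hn, hnh⟩ := hE
  obtain ⟨n', rfl⟩ := hn
  have hn'h : (2 * (n':ℝ)) * h = 1 := by
    rw [← hnh]; push_cast; ring
  have hnpos : 0 < (n':ℝ) := by nlinarith
  have hh2 : h ≤ 1/2 := by
    have hn1 : (1:ℝ) ≤ (n':ℝ) := by
      have : (0:ℤ) < n' := by exact_mod_cast hnpos
      exact_mod_cast this
    nlinarith
  -- floor bounds
  have fb1 : ⌊x⌋ - 1 ≤ ⌊x - h⌋ := by
    apply Int.le_floor.mpr
    push_cast
    have := Int.floor_le x
    linarith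
  have fb2 : ⌊x - h⌋ ≤ ⌊x⌋ := Int.floor_le_floor (by linarith)
  have fb3 : ⌊x⌋ ≤ ⌊x + h⌋ := Int.floor_le_floor (by linarith)
  have fb4 : ⌊x + h⌋ ≤ ⌊x⌋ + 1 := by
    have : ⌊x + h⌋ < ⌊x⌋ + 2 := by
      apply Int.floor_lt.mpr
      push_cast
      have := Int.lt_floor_add_one x
      linarith
    omega
  set W : Finset ℤ := Finset.Icc (⌊x⌋ - 2) (⌊x⌋ + 3) with hW
  have s1 : win (x - h) ⊆ W := by
    rw [win, hW]; exact Finset.Icc_subset_Icc (by omega) (by omega)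
  have s2 : win (x + h) ⊆ W := by
    rw [win, hW]; exact Finset.Icc_subset_Icc (by omega) (by omega)
  have s3 : win x ⊆ W := by
    rw [win, hW]; exact Finset.Icc_subset_Icc (by omega) (by omega)
  rw [Phi_eq_sum ν f (x-h) s1, Phi_eq_sum ν f (x+h) s2, Phi_eq_sum ν f x s3]
  rw [← Finset.sum_add_distrib, Finset.mul_sum]
  apply Finset.sum_congr rfl
  intro j _
  have hxj : ∃ M : ℤ, x - (j:ℝ) = (2 * (M:ℝ) + 1) * h := by
    obtain ⟨M₀, hM₀⟩ := hx
    refine ⟨M₀ - j * n', ?_⟩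
    have : (j:ℝ) = (j:ℝ) * ((2 * (n':ℝ)) * h) := by rw [hn'h]; ring
    rw [hM₀, this]; push_cast; ring
  have key := Gf_step ν hh hxj ⟨2 * n', even_two_mul n', by rw [← hnh]; push_cast; ring⟩
  have a1 : x - h - (j:ℝ) = (x - (j:ℝ)) - h := by ring
  have a2 : x + h - (j:ℝ) = (x - (j:ℝ)) + h := by ring
  rw [a1, a2, ← mul_add, key]
  ring

lemma Phi_continuous (ν : ℂ) (f : ℤ → ℂ) : Continuous (Phi ν f) := by
  rw [continuous_iff_continuousAt]
  intro x₀
  have hmem : Set.Ioo (x₀ - 1) (x₀ + 1) ∈ nhds x₀ :=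
    Ioo_mem_nhds (by linarith) (by linarith)
  set S : Finset ℤ := Finset.Icc (⌊x₀⌋ - 2) (⌊x₀⌋ + 3) with hS
  have heq : ∀ x ∈ Set.Ioo (x₀ - 1) (x₀ + 1),
      Phi ν f x = ∑ j ∈ S, f j * Gf ν (x - (j:ℝ)) := by
    intro x hx
    obtain ⟨hx1, hx2⟩ := hx
    apply Phi_eq_sum
    have fb1 : ⌊x₀⌋ - 1 ≤ ⌊x⌋ := by
      apply Int.le_floor.mpr
      push_cast
      have := Int.floor_le x₀
      linarith
    have fb2 : ⌊x⌋ ≤ ⌊x₀⌋ + 1 := by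
      have : ⌊x⌋ < ⌊x₀⌋ + 2 := by
        apply Int.floor_lt.mpr
        push_cast
        have := Int.lt_floor_add_one x₀
        linarith
      omega
    rw [win, hS]
    exact Finset.Icc_subset_Icc (by omega) (by omega)
  have hcont : Continuous fun x : ℝ => ∑ j ∈ S, f j * Gf ν (x - (j:ℝ)) := by
    apply continuous_finset_sum
    intro j _
    exact continuous_const.mul ((Gf_continuous ν).comp (continuous_id.sub continuous_const))
  apply ContinuousAt.congr (hcont.continuousAt)
  filter_upwards [hmem] with x hx
  exact (heq x hx).symm


/-- A mask supported on `{-1,0,1}`. -/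
def SmallMask (a : ℤ → ℂ) : Prop := ∀ i : ℤ, i ≠ 0 → i ≠ 1 → i ≠ -1 → a i = 0

lemma hMask_small (p : ℝ) (lam : ℂ) (k : ℕ) : SmallMask (hMask p lam k) := by
  intro i h0 h1 hm1
  simp only [hMask, if_neg h0]
  rw [if_neg]
  push_neg
  exact ⟨h1, hm1⟩

lemma subOpCC_even {a : ℤ → ℂ} (ha : SmallMask a) (f : ℤ → ℂ) (n : ℤ) :
    subOpCC a f (2 * n) = a 0 * f n := by
  rw [subOpCC]
  have : ∀ j : ℤ, j ≠ n → a (2 * n - 2 * j) * f j = 0 := by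
    intro j hj
    rw [ha (2 * n - 2 * j) (by omega) (by omega) (by omega), zero_mul]
  rw [finsum_eq_single _ n this, show 2 * n - 2 * n = 0 by ring]

lemma subOpCC_odd {a : ℤ → ℂ} (ha : SmallMask a) (f : ℤ → ℂ) (n : ℤ) :
    subOpCC a f (2 * n + 1) = a 1 * f n + a (-1) * f (n + 1) := by
  rw [subOpCC]
  have hsupp : (Function.support fun j : ℤ => a (2 * n + 1 - 2 * j) * f j) ⊆
      (({n, n + 1} : Finset ℤ) : Set ℤ) := by
    intro j hj
    simp only [Function.mem_support] at hj
    by_contra hmem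
    simp only [Finset.coe_insert, Finset.coe_singleton, Set.mem_insert_iff,
      Set.mem_singleton_iff] at hmem
    push_neg at hmem
    obtain ⟨h1, h2⟩ := hmem
    exact hj (by rw [ha (2 * n + 1 - 2 * j) (by omega) (by omega) (by omega), zero_mul])
  rw [finsum_eq_finset_sum_of_support_subset _ hsupp,
    Finset.sum_insert (by simp only [Finset.mem_singleton]; omega), Finset.sum_singleton,
    show 2 * n + 1 - 2 * n = 1 by ring, show 2 * n + 1 - 2 * (n + 1) = -1 by ring]


def wfun (lam : ℂ) (k : ℕ) : ℂ :=
  (Complex.exp (lam * (2 : ℂ) ^ (-(k : ℤ) - 1)))⁻¹ + Complex.exp (lam * (2 : ℂ) ^ (-(k : ℤ) - 1))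

lemma wfun_eq_cosh (lam : ℂ) (k : ℕ) :
    wfun lam k = 2 * Complex.cosh (lam * (2 : ℂ) ^ (-(k : ℤ) - 1)) := by
  rw [wfun, Complex.cosh, ← Complex.exp_neg]
  ring

lemma hMask_e0 (lam : ℂ) (k : ℕ) : hMask 0 lam k 0 = 1 := by
  simp [hMask]

lemma hMask_e1 (lam : ℂ) (k : ℕ) : hMask 0 lam k 1 = (wfun lam k)⁻¹ := by
  simp [hMask, wfun, one_div]

lemma hMask_em1 (lam : ℂ) (k : ℕ) : hMask 0 lam k (-1) = (wfun lam k)⁻¹ := by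
  simp [hMask, wfun, one_div]

lemma hMask_scal (p : ℝ) (lam : ℂ) (k : ℕ) (i : ℤ) :
    hMask p lam k i = Complex.exp (-(p : ℂ) * lam * (2 : ℂ) ^ (-(k : ℤ) - 1)) * hMask 0 lam k i := by
  rcases eq_or_ne i 0 with rfl | h0
  · rw [hMask_e0]
    simp [hMask]
  rcases eq_or_ne i 1 with rfl | h1
  · rw [hMask_e1]
    simp only [hMask, one_ne_zero, if_neg, reduceIte, wfun]
    push_cast
    rw [div_eq_mul_inv]
    norm_num
  rcases eq_or_ne i (-1) with rfl | hm1
  · rw [hMask_em1]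
    simp only [hMask, neg_eq_zero, one_ne_zero, if_neg, reduceIte, wfun]
    norm_num [div_eq_mul_inv]
  · rw [hMask_small p lam k i h0 h1 hm1, hMask_small 0 lam k i h0 h1 hm1, mul_zero]

lemma smallMask_smul {a : ℤ → ℂ} (ha : SmallMask a) (c : ℂ) :
    SmallMask (fun i => c * a i) := by
  intro i h0 h1 hm1
  show c * a i = 0
  rw [ha i h0 h1 hm1, mul_zero]

lemma subOpCC_smul_mask {a : ℤ → ℂ} (ha : SmallMask a) (c : ℂ) (f : ℤ → ℂ) (i : ℤ) :
    subOpCC (fun j => c * a j) f i = c * subOpCC a f i := by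
  rcases Int.even_or_odd i with ⟨n, rfl⟩ | ⟨n, rfl⟩
  · rw [show n + n = 2 * n by ring, subOpCC_even (smallMask_smul ha c) f n,
      subOpCC_even ha f n]
    ring
  · rw [subOpCC_odd (smallMask_smul ha c) f n, subOpCC_odd ha f n]
    ring

lemma subOpCC_smul_data {a : ℤ → ℂ} (ha : SmallMask a) (c : ℂ) (f : ℤ → ℂ) (i : ℤ) :
    subOpCC a (fun j => c * f j) i = c * subOpCC a f i := by
  rcases Int.even_or_odd i with ⟨n, rfl⟩ | ⟨n, rfl⟩
  · rw [show n + n = 2 * n by ring, subOpCC_even ha _ n, subOpCC_even ha f n]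
    ring
  · rw [subOpCC_odd ha _ n, subOpCC_odd ha f n]
    ring

lemma subIterCC_add (a : ℕ → ℤ → ℂ) (m s : ℕ) :
    ∀ (ℓ : ℕ) (f : ℤ → ℂ), subIterCC a m (s + ℓ) f = subIterCC a (m + s) ℓ (subIterCC a m s f) := by
  intro ℓ
  induction ℓ with
  | zero => intro f; rfl
  | succ ℓ ih =>
    intro f
    show subIterCC a m ((s + ℓ) + 1) f = _
    rw [subIterCC, subIterCC, ih f, show m + (s + ℓ) = m + s + ℓ by ring]
lemma iter_scal (p : ℝ) (lam : ℂ) (m : ℕ) :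
    ∀ (ℓ : ℕ) (f : ℤ → ℂ) (i : ℤ),
      subIterCC (hMask p lam) m ℓ f i =
        Complex.exp (-(p : ℂ) * lam * ((2:ℂ) ^ (-(m:ℤ)) - (2:ℂ) ^ (-(m:ℤ) - (ℓ:ℤ)))) *
          subIterCC (hMask 0 lam) m ℓ f i := by
  intro ℓ
  induction ℓ with
  | zero =>
    intro f i
    norm_num [subIterCC]
  | succ ℓ ih =>
    intro f i
    show subOpCC (hMask p lam (m + ℓ)) (subIterCC (hMask p lam) m ℓ f) i = _
    have hfun : subIterCC (hMask p lam) m ℓ f =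
        fun j => Complex.exp (-(p : ℂ) * lam * ((2:ℂ) ^ (-(m:ℤ)) - (2:ℂ) ^ (-(m:ℤ) - (ℓ:ℤ)))) *
          subIterCC (hMask 0 lam) m ℓ f j := funext (ih f)
    rw [hfun, subOpCC_smul_data (hMask_small p lam (m+ℓ)) _ _ i]
    have hm : hMask p lam (m + ℓ) =
        fun j => Complex.exp (-(p : ℂ) * lam * (2 : ℂ) ^ (-((m+ℓ : ℕ) : ℤ) - 1)) *
          hMask 0 lam (m + ℓ) j := funext (hMask_scal p lam (m+ℓ))
    rw [hm, subOpCC_smul_mask (hMask_small 0 lam (m+ℓ)) _ _ i]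
    show _ * (_ * subOpCC (hMask 0 lam (m + ℓ)) (subIterCC (hMask 0 lam) m ℓ f) i) = _
    have hiter : subOpCC (hMask 0 lam (m + ℓ)) (subIterCC (hMask 0 lam) m ℓ f) i =
        subIterCC (hMask 0 lam) m (ℓ+1) f i := rfl
    rw [hiter, ← mul_assoc, ← Complex.exp_add]
    congr 2
    have h2 : (2:ℂ) ^ (-(m:ℤ) - (ℓ:ℤ)) = (2:ℂ) ^ (-(m:ℤ) - (ℓ:ℤ) - 1) * 2 := by
      rw [← zpow_add_one₀ (two_ne_zero)]
      congr 1
      ring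
    have h3 : (-((m+ℓ : ℕ) : ℤ) - 1) = -(m:ℤ) - (ℓ:ℤ) - 1 := by push_cast; ring
    have h4 : (-(m:ℤ) - ((ℓ+1 : ℕ) : ℤ)) = -(m:ℤ) - (ℓ:ℤ) - 1 := by push_cast; ring
    rw [h3, h4, h2]
    ring

lemma iter0_even (lam : ℂ) (m : ℕ) :
    ∀ (ℓ : ℕ) (f : ℤ → ℂ) (j : ℤ), subIterCC (hMask 0 lam) m ℓ f ((2:ℤ)^ℓ * j) = f j := by
  intro ℓ
  induction ℓ with
  | zero => intro f j; show f _ = f j; norm_num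
  | succ ℓ ih =>
    intro f j
    show subOpCC (hMask 0 lam (m + ℓ)) (subIterCC (hMask 0 lam) m ℓ f) ((2:ℤ)^(ℓ+1) * j) = f j
    rw [show (2:ℤ)^(ℓ+1) * j = 2 * ((2:ℤ)^ℓ * j) by ring,
      subOpCC_even (hMask_small 0 lam (m+ℓ)), hMask_e0, one_mul, ih]

lemma iter0_delta_supp (lam : ℂ) (m : ℕ) :
    ∀ (ℓ : ℕ) (j : ℤ), (2:ℤ)^ℓ ≤ |j| → subIterCC (hMask 0 lam) m ℓ deltaC j = 0 := by
  intro ℓ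
  induction ℓ with
  | zero =>
    intro j hj
    show deltaC j = 0
    rw [deltaC, if_neg (by rintro rfl; simp at hj)]
  | succ ℓ ih =>
    intro j hj
    have hP : (0:ℤ) < 2^ℓ := pow_pos (by norm_num) ℓ
    rw [pow_succ] at hj
    rcases Int.even_or_odd j with ⟨n, rfl⟩ | ⟨n, rfl⟩
    · rw [show n + n = 2 * n by ring] at hj ⊢
      show subOpCC (hMask 0 lam (m + ℓ)) _ (2 * n) = 0
      rw [subOpCC_even (hMask_small 0 lam (m+ℓ)), hMask_e0, one_mul]
      refine ih n ?_
      rw [abs_mul] at hj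
      rcases abs_cases n with ⟨e1, _⟩ | ⟨e1, _⟩ <;> simp [e1] at hj ⊢ <;> omega
    · show subOpCC (hMask 0 lam (m + ℓ)) _ (2 * n + 1) = 0
      rw [subOpCC_odd (hMask_small 0 lam (m+ℓ))]
      have h1 : (2:ℤ)^ℓ ≤ |n| := by
        rcases abs_cases (2*n+1) with ⟨e1, _⟩ | ⟨e1, _⟩ <;>
          rcases abs_cases n with ⟨e2, _⟩ | ⟨e2, _⟩ <;> omega
      have h2 : (2:ℤ)^ℓ ≤ |n + 1| := by
        rcases abs_cases (2*n+1) with ⟨e1, _⟩ | ⟨e1, _⟩ <;>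
          rcases abs_cases (n+1) with ⟨e2, _⟩ | ⟨e2, _⟩ <;> omega
      rw [ih n h1, ih (n+1) h2, mul_zero, mul_zero, add_zero]

def kap (lam : ℂ) (k : ℕ) : ℝ := max 1 (2 * ‖(wfun lam k)⁻¹‖)

lemma kap_one_le (lam : ℂ) (k : ℕ) : 1 ≤ kap lam k := le_max_left _ _

lemma subOp0_norm_le (lam : ℂ) (k : ℕ) (f : ℤ → ℂ) {C : ℝ} (hC : 0 ≤ C)
    (hf : ∀ j, ‖f j‖ ≤ C) (i : ℤ) : ‖subOpCC (hMask 0 lam k) f i‖ ≤ kap lam k * C := by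
  have hk1 : 1 ≤ kap lam k := kap_one_le lam k
  rcases Int.even_or_odd i with ⟨n, rfl⟩ | ⟨n, rfl⟩
  · rw [show n + n = 2 * n by ring, subOpCC_even (hMask_small 0 lam k), hMask_e0, one_mul]
    calc ‖f n‖ ≤ C := hf n
      _ ≤ kap lam k * C := by nlinarith
  · rw [subOpCC_odd (hMask_small 0 lam k), hMask_e1, hMask_em1]
    have hw : 2 * ‖(wfun lam k)⁻¹‖ ≤ kap lam k := le_max_right _ _
    calc ‖(wfun lam k)⁻¹ * f n + (wfun lam k)⁻¹ * f (n+1)‖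
        ≤ ‖(wfun lam k)⁻¹ * f n‖ + ‖(wfun lam k)⁻¹ * f (n+1)‖ := norm_add_le _ _
      _ = ‖(wfun lam k)⁻¹‖ * ‖f n‖ + ‖(wfun lam k)⁻¹‖ * ‖f (n+1)‖ := by
          rw [norm_mul, norm_mul]
      _ ≤ ‖(wfun lam k)⁻¹‖ * C + ‖(wfun lam k)⁻¹‖ * C := by
          have := norm_nonneg (wfun lam k)⁻¹
          gcongr <;> [exact hf n; exact hf (n+1)]
      _ = (2 * ‖(wfun lam k)⁻¹‖) * C := by ring
      _ ≤ kap lam k * C := by nlinarith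

lemma iter0_norm_le (lam : ℂ) (m : ℕ) :
    ∀ (ℓ : ℕ) (f : ℤ → ℂ) (C : ℝ), 0 ≤ C → (∀ j, ‖f j‖ ≤ C) →
      ∀ j, ‖subIterCC (hMask 0 lam) m ℓ f j‖ ≤ (∏ k ∈ Finset.range ℓ, kap lam (m + k)) * C := by
  intro ℓ
  induction ℓ with
  | zero =>
    intro f C hC hf j
    simpa [subIterCC] using hf j
  | succ ℓ ih =>
    intro f C hC hf j
    have hprod : 0 ≤ ∏ k ∈ Finset.range ℓ, kap lam (m + k) :=
      Finset.prod_nonneg fun k _ => le_trans zero_le_one (kap_one_le lam (m+k))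
    have := subOp0_norm_le lam (m + ℓ) (subIterCC (hMask 0 lam) m ℓ f)
      (mul_nonneg hprod hC) (ih f C hC hf) j
    calc ‖subIterCC (hMask 0 lam) m (ℓ+1) f j‖
        ≤ kap lam (m + ℓ) * ((∏ k ∈ Finset.range ℓ, kap lam (m + k)) * C) := this
      _ = (∏ k ∈ Finset.range (ℓ+1), kap lam (m + k)) * C := by
          rw [Finset.prod_range_succ]; ring
lemma cast_dyadic (lam : ℂ) (t ℓ : ℕ) :
    lam * (2:ℂ) ^ (-((t + ℓ : ℕ) : ℤ) - 1) =
      (lam * (2:ℂ) ^ (-(t:ℤ))) * (((1:ℝ) / 2^(ℓ+1) : ℝ) : ℂ) := by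
  have h1 : (((1:ℝ) / 2^(ℓ+1) : ℝ) : ℂ) = (2:ℂ) ^ (-((ℓ+1 : ℕ) : ℤ)) := by
    rw [zpow_neg, zpow_natCast]
    push_cast
    norm_num
  rw [h1, mul_assoc, ← zpow_add₀ (two_ne_zero : (2:ℂ) ≠ 0)]
  congr 2
  push_cast
  ring

lemma iter0_eq_Phi (lam : ℂ) (t : ℕ) (hν : ‖lam * (2:ℂ) ^ (-(t:ℤ))‖ ≤ 1/2) :
    ∀ (ℓ : ℕ) (f : ℤ → ℂ) (i : ℤ),
      subIterCC (hMask 0 lam) t ℓ f i =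
        Phi (lam * (2:ℂ) ^ (-(t:ℤ))) f ((i : ℝ) / 2^ℓ) := by
  set ν : ℂ := lam * (2:ℂ) ^ (-(t:ℤ)) with hνdef
  have hsinh : ν = 0 ∨ Complex.sinh ν ≠ 0 := by
    by_cases h : ν = 0
    · exact Or.inl h
    · exact Or.inr (sinh_ne_zero_of_small hν h)
  have hhpos : ∀ ℓ : ℕ, (0:ℝ) < (1:ℝ) / 2^(ℓ+1) := by
    intro ℓ; positivity
  have hcosh : ∀ ℓ : ℕ, Complex.cosh (ν * (((1:ℝ) / 2^(ℓ+1) : ℝ) : ℂ)) ≠ 0 := by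
    intro ℓ
    apply cosh_ne_zero_of_small
    rw [norm_mul, Complex.norm_real, Real.norm_of_nonneg (hhpos ℓ).le]
    have h1 : (1:ℝ) / 2^(ℓ+1) ≤ 1/2 := by
      rw [div_le_div_iff₀ (by positivity) (by norm_num)]
      have : (2:ℝ)^1 ≤ 2^(ℓ+1) := pow_le_pow_right₀ (by norm_num) (by omega)
      simpa using this
    have h0 : (0:ℝ) ≤ ‖ν‖ := norm_nonneg ν
    nlinarith
  intro ℓ
  induction ℓ with
  | zero =>
    intro f i
    rw [pow_zero, div_one]
    exact (Phi_int ν hsinh f i).symm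
  | succ ℓ ih =>
    intro f i
    rcases Int.even_or_odd i with ⟨n, rfl⟩ | ⟨n, rfl⟩
    · rw [show n + n = 2 * n by ring]
      show subOpCC (hMask 0 lam (t + ℓ)) _ (2 * n) = _
      rw [subOpCC_even (hMask_small 0 lam (t+ℓ)), hMask_e0, one_mul, ih f n]
      congr 1
      push_cast
      rw [pow_succ]
      field_simp
    · show subOpCC (hMask 0 lam (t + ℓ)) _ (2 * n + 1) = _
      rw [subOpCC_odd (hMask_small 0 lam (t+ℓ)), hMask_e1, hMask_em1, ih f n, ih f (n+1)]
      set h : ℝ := (1:ℝ) / 2^(ℓ+1) with hhdef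
      set x : ℝ := ((2 * n + 1 : ℤ) : ℝ) / 2^(ℓ+1) with hxdef
      have hx : x = (2 * (n:ℝ) + 1) * h := by
        rw [hxdef, hhdef]; push_cast; ring
      have hstep := Phi_step ν f (hhpos ℓ) ⟨n, hx⟩
        ⟨2^(ℓ+1), by rw [show ((2:ℤ)^(ℓ+1)) = 2 * 2^ℓ by ring]; exact even_two_mul _,
          by push_cast; field_simp⟩
      have hxm : x - h = (n:ℝ) / 2^ℓ := by
        rw [hx, hhdef]; push_cast; rw [pow_succ]; field_simp; ring
      have hxp : x + h = ((n:ℝ) + 1) / 2^ℓ := by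
        rw [hx, hhdef]; push_cast; rw [pow_succ]; field_simp; ring
      rw [hxm, hxp] at hstep
      have hw : wfun lam (t + ℓ) = 2 * Complex.cosh (ν * ((h : ℝ) : ℂ)) := by
        rw [wfun_eq_cosh, cast_dyadic lam t ℓ]
      have hwne : wfun lam (t + ℓ) ≠ 0 := by
        rw [hw]
        exact mul_ne_zero two_ne_zero (hcosh ℓ)
      have hn1 : ((n + 1 : ℤ) : ℝ) = (n:ℝ) + 1 := by push_cast; ring
      rw [hn1, ← mul_add, hstep, hw]
      exact inv_mul_cancel_left₀ (by rw [← hw]; exact hwne) _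
section Assembly

variable (p : ℝ) (lam : ℂ) (T : ℕ)

/-- The limit function of the level-`m` scheme started with data `f`. -/
def limitG (m : ℕ) (f : ℤ → ℂ) : ℝ → ℂ :=
  fun x => Complex.exp (-(p:ℂ) * lam * (2:ℂ) ^ (-(m:ℤ))) *
    Phi (lam * (2:ℂ) ^ (-((max m T : ℕ):ℤ)))
      (subIterCC (hMask 0 lam) m (max m T - m) f) ((2:ℝ) ^ (max m T - m) * x)

/-- The uniform product constant. -/
def PK : ℝ := ∏ k ∈ Finset.range T, kap lam k

lemma one_le_prod_kap (s : Finset ℕ) : 1 ≤ ∏ k ∈ s, kap lam k := by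
  have h := Finset.prod_le_prod (s := s) (f := fun _ => (1:ℝ)) (g := fun k => kap lam k)
    (by intros; norm_num) (by intros; exact kap_one_le lam _)
  simpa using h

lemma PK_one_le : 1 ≤ PK lam T := one_le_prod_kap lam (Finset.range T)

lemma D_norm_le (m : ℕ) (f : ℤ → ℂ) {C : ℝ} (hC : 0 ≤ C) (hf : ∀ j, ‖f j‖ ≤ C) (j : ℤ) :
    ‖subIterCC (hMask 0 lam) m (max m T - m) f j‖ ≤ PK lam T * C := by
  have h1 := iter0_norm_le lam m (max m T - m) f C hC hf j
  refine le_trans h1 ?_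
  have h2 : (∏ k ∈ Finset.range (max m T - m), kap lam (m + k)) =
      ∏ k ∈ Finset.Ico m (max m T), kap lam k :=
    (Finset.prod_Ico_eq_prod_range _ _ _).symm
  have h3 : Finset.Ico m (max m T) ⊆ Finset.range T := by
    intro x hx
    simp only [Finset.mem_Ico, Finset.mem_range] at hx ⊢
    omega
  have h4 : (∏ k ∈ Finset.Ico m (max m T), kap lam k) ≤ PK lam T := by
    rw [PK, ← Finset.prod_sdiff h3]
    have h5 : (1:ℝ) ≤ ∏ k ∈ Finset.range T \ Finset.Ico m (max m T), kap lam k :=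
      one_le_prod_kap lam _
    have h6 : (0:ℝ) ≤ ∏ k ∈ Finset.Ico m (max m T), kap lam k :=
      le_trans zero_le_one (one_le_prod_kap lam _)
    nlinarith
  have hPK : (0:ℝ) ≤ PK lam T := le_trans zero_le_one (PK_one_le lam T)
  rw [h2]
  exact mul_le_mul_of_nonneg_right h4 hC

lemma norm_exp_factor_le (m : ℕ) :
    ‖Complex.exp (-(p:ℂ) * lam * (2:ℂ) ^ (-(m:ℤ)))‖ ≤ Real.exp (|p| * ‖lam‖) := by
  rw [Complex.norm_exp]
  apply Real.exp_le_exp.mpr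
  calc (-(p:ℂ) * lam * (2:ℂ) ^ (-(m:ℤ))).re ≤ ‖-(p:ℂ) * lam * (2:ℂ) ^ (-(m:ℤ))‖ := by
        exact Complex.re_le_norm _
    _ = |p| * ‖lam‖ * ‖(2:ℂ) ^ (-(m:ℤ))‖ := by
        rw [norm_mul, norm_mul, norm_neg, Complex.norm_real, Real.norm_eq_abs]
    _ ≤ |p| * ‖lam‖ * 1 := by
        have h1 : ‖(2:ℂ) ^ (-(m:ℤ))‖ ≤ 1 := by
          rw [norm_zpow, Complex.norm_ofNat]
          rw [zpow_neg, zpow_natCast]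
          rw [inv_le_one_iff₀]
          right
          exact one_le_pow₀ one_le_two
        have h2 : (0:ℝ) ≤ |p| * ‖lam‖ := mul_nonneg (abs_nonneg p) (norm_nonneg lam)
        nlinarith
    _ = |p| * ‖lam‖ := mul_one _

lemma norm_exp_factor_ge (m : ℕ) :
    Real.exp (-(|p| * ‖lam‖)) ≤ ‖Complex.exp (-(p:ℂ) * lam * (2:ℂ) ^ (-(m:ℤ)))‖ := by
  rw [Complex.norm_exp]
  apply Real.exp_le_exp.mpr
  have h0 : |(-(p:ℂ) * lam * (2:ℂ) ^ (-(m:ℤ))).re| ≤ ‖-(p:ℂ) * lam * (2:ℂ) ^ (-(m:ℤ))‖ := by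
    exact Complex.abs_re_le_norm _
  have h1 : ‖-(p:ℂ) * lam * (2:ℂ) ^ (-(m:ℤ))‖ ≤ |p| * ‖lam‖ := by
    rw [norm_mul, norm_mul, norm_neg, Complex.norm_real, Real.norm_eq_abs]
    have h2 : ‖(2:ℂ) ^ (-(m:ℤ))‖ ≤ 1 := by
      rw [norm_zpow, Complex.norm_ofNat, zpow_neg, zpow_natCast, inv_le_one_iff₀]
      right
      exact one_le_pow₀ one_le_two
    have h3 : (0:ℝ) ≤ |p| * ‖lam‖ := mul_nonneg (abs_nonneg p) (norm_nonneg lam)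
    nlinarith [norm_nonneg ((2:ℂ) ^ (-(m:ℤ)))]
  have := abs_le.mp h0
  linarith [this.1]

lemma limitG_norm_le (hT : ∀ t, T ≤ t → ‖lam * (2:ℂ) ^ (-(t:ℤ))‖ ≤ 1/2)
    (m : ℕ) (f : ℤ → ℂ) {C : ℝ} (hC : 0 ≤ C) (hf : ∀ j, ‖f j‖ ≤ C) (x : ℝ) :
    ‖limitG p lam T m f x‖ ≤ Real.exp (|p| * ‖lam‖) * (16 * (PK lam T * C)) := by
  rw [limitG, norm_mul]
  have h1 := norm_exp_factor_le p lam m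
  have h2 : ‖Phi (lam * (2:ℂ) ^ (-((max m T : ℕ):ℤ)))
      (subIterCC (hMask 0 lam) m (max m T - m) f) ((2:ℝ) ^ (max m T - m) * x)‖ ≤
      4 * (4 * (PK lam T * C)) := by
    apply Phi_norm_le _ _ _ (D_norm_le lam T m f hC hf)
    exact hT (max m T) (le_max_right m T)
  have h3 : (0:ℝ) ≤ ‖Phi (lam * (2:ℂ) ^ (-((max m T : ℕ):ℤ)))
      (subIterCC (hMask 0 lam) m (max m T - m) f) ((2:ℝ) ^ (max m T - m) * x)‖ :=
    norm_nonneg _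
  have h4 : (0:ℝ) < Real.exp (|p| * ‖lam‖) := Real.exp_pos _
  nlinarith [norm_nonneg (Complex.exp (-(p:ℂ) * lam * (2:ℂ) ^ (-(m:ℤ))))]

lemma limitG_continuous (m : ℕ) (f : ℤ → ℂ) : Continuous (limitG p lam T m f) :=
  continuous_const.mul ((Phi_continuous _ _).comp (continuous_const.mul continuous_id))

lemma limitG_int (hT : ∀ t, T ≤ t → ‖lam * (2:ℂ) ^ (-(t:ℤ))‖ ≤ 1/2) (m : ℕ) (f : ℤ → ℂ)
    (j : ℤ) : limitG p lam T m f ((j:ℝ)) =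
      Complex.exp (-(p:ℂ) * lam * (2:ℂ) ^ (-(m:ℤ))) * f j := by
  rw [limitG]
  congr 1
  set ν : ℂ := lam * (2:ℂ) ^ (-((max m T : ℕ):ℤ)) with hνdef
  have hν : ‖ν‖ ≤ 1/2 := hT (max m T) (le_max_right m T)
  have hsinh : ν = 0 ∨ Complex.sinh ν ≠ 0 := by
    by_cases h : ν = 0
    · exact Or.inl h
    · exact Or.inr (sinh_ne_zero_of_small hν h)
  have hcast : (2:ℝ) ^ (max m T - m) * (j:ℝ) = ((((2:ℤ) ^ (max m T - m) * j : ℤ)):ℝ) := by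
    push_cast; ring
  rw [hcast, Phi_int ν hsinh, iter0_even]


lemma limitG_eq (hT : ∀ t, T ≤ t → ‖lam * (2:ℂ) ^ (-(t:ℤ))‖ ≤ 1/2) (m : ℕ) {k : ℕ}
    (hk : max m T - m ≤ k) (f : ℤ → ℂ) (i : ℤ) :
    Phi (lam * (2:ℂ) ^ (-((max m T : ℕ):ℤ)))
      (subIterCC (hMask 0 lam) m (max m T - m) f) ((2:ℝ) ^ (max m T - m) * ((i:ℝ) / 2^k)) =
      subIterCC (hMask 0 lam) m k f i := by
  set s := max m T - m with hs
  have hms : m + s = max m T := Nat.add_sub_cancel' (le_max_left m T)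
  have hsplit : s + (k - s) = k := by omega
  have h1 : subIterCC (hMask 0 lam) m k f i =
      subIterCC (hMask 0 lam) (m + s) (k - s) (subIterCC (hMask 0 lam) m s f) i := by
    rw [← hsplit, subIterCC_add]
    rw [hsplit]
  rw [h1, hms]
  rw [iter0_eq_Phi lam (max m T) (hT _ (le_max_right m T)) (k - s) _ i]
  congr 1
  have hpow : (2:ℝ)^k = 2^s * 2^(k-s) := by rw [← pow_add]; congr 1; omega
  rw [hpow]
  have h2 : ((2:ℝ))^s ≠ 0 := by positivity
  have h3 : ((2:ℝ))^(k-s) ≠ 0 := by positivity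
  field_simp

lemma limitG_conv (hT : ∀ t, T ≤ t → ‖lam * (2:ℂ) ^ (-(t:ℤ))‖ ≤ 1/2)
    (m : ℕ) (f : ℤ → ℂ) {C : ℝ} (hC : 0 ≤ C) (hf : ∀ j, ‖f j‖ ≤ C) :
    ∀ ε > (0:ℝ), ∃ K : ℕ, ∀ k ≥ K, ∀ i : ℤ,
      ‖limitG p lam T m f ((i:ℝ) / 2^k) - subIterCC (hMask p lam) m k f i‖ < ε := by
  intro ε hε
  set s := max m T - m with hs
  set ν : ℂ := lam * (2:ℂ) ^ (-((max m T : ℕ):ℤ)) with hν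
  set D : ℤ → ℂ := subIterCC (hMask 0 lam) m s f with hD
  set einf : ℂ := Complex.exp (-(p:ℂ) * lam * (2:ℂ) ^ (-(m:ℤ))) with heinf
  set E : ℕ → ℂ := fun k => Complex.exp
    (-(p:ℂ) * lam * ((2:ℂ) ^ (-(m:ℤ)) - (2:ℂ) ^ (-(m:ℤ) - (k:ℤ)))) with hE
  set B : ℝ := 4 * (4 * (PK lam T * C)) with hB
  have hPhiB : ∀ y : ℝ, ‖Phi ν D y‖ ≤ B := by
    intro y
    exact Phi_norm_le ν D y (D_norm_le lam T m f hC hf) (hT _ (le_max_right m T))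
  have h1 : Filter.Tendsto (fun k : ℕ => (2:ℂ) ^ (-(m:ℤ) - (k:ℤ))) Filter.atTop (nhds 0) := by
    have heq : (fun k : ℕ => (2:ℂ) ^ (-(m:ℤ) - (k:ℤ))) =
        fun k : ℕ => (2:ℂ) ^ (-(m:ℤ)) * ((2:ℂ)⁻¹)^k := by
      funext k
      rw [sub_eq_add_neg, zpow_add₀ (two_ne_zero : (2:ℂ) ≠ 0)]
      congr 1
      rw [zpow_neg, zpow_natCast, inv_pow]

    rw [heq]
    have h2 : Filter.Tendsto (fun k : ℕ => ((2:ℂ)⁻¹)^k) Filter.atTop (nhds 0) := by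
      apply tendsto_pow_atTop_nhds_zero_of_norm_lt_one
      rw [norm_inv, Complex.norm_ofNat]
      norm_num
    simpa using h2.const_mul ((2:ℂ) ^ (-(m:ℤ)))
  have h3 : Filter.Tendsto E Filter.atTop (nhds einf) := by
    have h2 : Filter.Tendsto
        (fun k : ℕ => -(p:ℂ) * lam * ((2:ℂ) ^ (-(m:ℤ)) - (2:ℂ) ^ (-(m:ℤ) - (k:ℤ))))
        Filter.atTop (nhds (-(p:ℂ) * lam * ((2:ℂ) ^ (-(m:ℤ)) - 0))) :=
      (tendsto_const_nhds.sub h1).const_mul _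
    rw [sub_zero] at h2
    exact (Complex.continuous_exp.tendsto _).comp h2
  have h4 : Filter.Tendsto (fun k : ℕ => ‖einf - E k‖ * B) Filter.atTop (nhds 0) := by
    have h5 : Filter.Tendsto (fun k : ℕ => einf - E k) Filter.atTop (nhds 0) := by
      have h5' : Filter.Tendsto (fun k : ℕ => einf - E k) Filter.atTop (nhds (einf - einf)) :=
        tendsto_const_nhds.sub h3
      rw [sub_self] at h5'
      exact h5'
    simpa using h5.norm.mul_const B
  have h6 : ∀ᶠ k : ℕ in Filter.atTop, ‖einf - E k‖ * B < ε :=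
    h4.eventually (gt_mem_nhds hε)
  obtain ⟨K₀, hK₀⟩ := Filter.eventually_atTop.mp h6
  refine ⟨max K₀ s, fun k hk i => ?_⟩
  have hks : s ≤ k := le_trans (le_max_right K₀ s) hk
  have hkK : K₀ ≤ k := le_trans (le_max_left K₀ s) hk
  have hexact := limitG_eq lam T hT m hks f i
  have hscal := iter_scal p lam m k f i
  have hlhs : limitG p lam T m f ((i:ℝ) / 2^k) =
      einf * subIterCC (hMask 0 lam) m k f i := by
    rw [limitG, hexact]
  rw [hlhs, hscal]
  have hX := hPhiB ((i:ℝ) / 2^(k - s))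
  have harg : ((2:ℝ) ^ s * ((i:ℝ) / 2^k)) = (i:ℝ) / 2^(k-s) := by
    have hpow : (2:ℝ)^k = 2^s * 2^(k-s) := by rw [← pow_add]; congr 1; omega
    rw [hpow]
    have h2 : ((2:ℝ))^s ≠ 0 := by positivity
    have h3' : ((2:ℝ))^(k-s) ≠ 0 := by positivity
    field_simp
  have hXval : ‖subIterCC (hMask 0 lam) m k f i‖ ≤ B := by
    rw [← hexact]
    exact hPhiB _
  calc ‖einf * subIterCC (hMask 0 lam) m k f i -
        E k * subIterCC (hMask 0 lam) m k f i‖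
      = ‖einf - E k‖ * ‖subIterCC (hMask 0 lam) m k f i‖ := by
        rw [← sub_mul, norm_mul]
    _ ≤ ‖einf - E k‖ * B := mul_le_mul_of_nonneg_left hXval (norm_nonneg _)
    _ < ε := hK₀ k hkK

lemma deltaC_norm_le (j : ℤ) : ‖deltaC j‖ ≤ 1 := by
  rw [deltaC]
  split_ifs <;> norm_num

lemma limitG_delta_supp (m : ℕ) {x : ℝ} (hx : 1 ≤ |x|) :
    limitG p lam T m deltaC x = 0 := by
  rw [limitG]
  rw [Phi]
  rw [Finset.sum_eq_zero, mul_zero]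
  intro j _
  set s := max m T - m with hs
  by_cases hj : (2:ℤ)^s ≤ |j|
  · rw [iter0_delta_supp lam m s j hj, zero_mul]
  · push_neg at hj
    have hj' : |(j:ℝ)| ≤ (2:ℝ)^s - 1 := by
      have : |j| ≤ (2:ℤ)^s - 1 := by omega
      have h2 : ((|j| : ℤ) : ℝ) ≤ (((2:ℤ)^s - 1 : ℤ) : ℝ) := by exact_mod_cast this
      rw [Int.cast_abs] at h2
      push_cast at h2
      exact h2
    have hy : (2:ℝ)^s ≤ |(2:ℝ)^s * x| := by
      rw [abs_mul, abs_of_nonneg (by positivity : (0:ℝ) ≤ (2:ℝ)^s)]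
      nlinarith [pow_pos (by norm_num : (0:ℝ) < 2) s]
    have h1 : 1 ≤ |(2:ℝ)^s * x - (j:ℝ)| := by
      have := abs_sub_abs_le_abs_sub ((2:ℝ)^s * x) ((j:ℝ))
      linarith [abs_nonneg ((2:ℝ)^s * x - (j:ℝ))]
    rw [Gf_of_one_le _ h1, mul_zero]

lemma exists_T (lam : ℂ) : ∃ T : ℕ, ∀ t : ℕ, T ≤ t → ‖lam * (2:ℂ) ^ (-(t:ℤ))‖ ≤ 1/2 := by
  obtain ⟨n, hn⟩ := exists_nat_gt (2 * ‖lam‖)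
  refine ⟨n, fun t ht => ?_⟩
  have h1 : ‖(2:ℂ) ^ (-(t:ℤ))‖ = ((2:ℝ)^t)⁻¹ := by
    rw [norm_zpow, Complex.norm_ofNat, zpow_neg, zpow_natCast]
  rw [norm_mul, h1]
  have h2 : (n:ℝ) < (2:ℝ)^n := by
    have := Nat.lt_two_pow_self (n := n)
    exact_mod_cast this
  have h3 : (2:ℝ)^n ≤ (2:ℝ)^t := pow_le_pow_right₀ one_le_two ht
  have h4 : (0:ℝ) < (2:ℝ)^t := by positivity
  have h5 : 2 * ‖lam‖ ≤ (2:ℝ)^t := by linarith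
  rw [mul_inv_le_iff₀ h4]
  linarith

end Assembly

end SubdAux

/-- Proposition 4.1(a): the auxiliary scheme `{S_{h_p^{[k]}}, k ≥ 0}` is
`C⁰`-convergent, its family of basic limit functions is stable, and for `p = 0` the scheme
is interpolatory. -/
theorem auxiliary_scheme_convergent_stable_interpolatory
    (p : ℝ) (hp : p = 0 ∨ p = -(1 / 2)) (lam : ℂ) :
    (∀ f₀ : ℤ → ℂ, BddSeqC f₀ → ∃ g : ℝ → ℂ, Continuous g ∧
      ∀ ε > (0 : ℝ), ∃ K : ℕ, ∀ k ≥ K, ∀ i : ℤ,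
        ‖g ((i : ℝ) / 2 ^ k) - subIterCC (hMask p lam) 0 k f₀ i‖ < ε) ∧
    (∃ H : ℕ → ℝ → ℂ,
      (∀ m : ℕ, Continuous (H m) ∧
        ∀ ε > (0 : ℝ), ∃ L : ℕ, ∀ l ≥ L, ∀ i : ℤ,
          ‖H m ((i : ℝ) / 2 ^ (l + 1)) - subIterCC (hMask p lam) m (l + 1) deltaC i‖ < ε) ∧
      ∃ C₁ C₂ : ℝ, 0 < C₁ ∧ C₁ ≤ C₂ ∧
        ∀ m : ℕ, ∀ c : ℤ → ℂ, BddSeqC c →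
          C₁ * (⨆ i : ℤ, ‖c i‖) ≤ (⨆ x : ℝ, ‖∑ᶠ i : ℤ, c i * H m (x - (i : ℝ))‖) ∧
          (⨆ x : ℝ, ‖∑ᶠ i : ℤ, c i * H m (x - (i : ℝ))‖) ≤ C₂ * (⨆ i : ℤ, ‖c i‖)) ∧
    (p = 0 → ∀ f : ℤ → ℂ, BddSeqC f → ∀ k : ℕ, ∀ i : ℤ,
      subOpCC (hMask p lam k) f (2 * i) = f i) := by
  obtain ⟨T, hT⟩ := SubdAux.exists_T lam
  refine ⟨?_, ?_, ?_⟩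
  · -- Clause 1: C⁰-convergence
    intro f₀ hBdd
    obtain ⟨C, hC⟩ : ∃ C : ℝ, ∀ i : ℤ, ‖f₀ i‖ ≤ C := hBdd
    have hC' : ∀ j, ‖f₀ j‖ ≤ max C 0 := fun j => le_trans (hC j) (le_max_left _ _)
    refine ⟨SubdAux.limitG p lam T 0 f₀, SubdAux.limitG_continuous p lam T 0 f₀, ?_⟩
    exact SubdAux.limitG_conv p lam T hT 0 f₀ (le_max_right _ _) hC'
  · -- Clause 2: basic limit functions and stability
    refine ⟨fun m => SubdAux.limitG p lam T m deltaC, ?_, ?_⟩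
    · intro m
      refine ⟨SubdAux.limitG_continuous p lam T m deltaC, ?_⟩
      intro ε hε
      obtain ⟨K, hK⟩ := SubdAux.limitG_conv p lam T hT m deltaC
        (zero_le_one) SubdAux.deltaC_norm_le ε hε
      exact ⟨K, fun l hl i => hK (l + 1) (le_trans hl (Nat.le_succ l)) i⟩
    · -- stability
      set BH : ℝ := Real.exp (|p| * ‖lam‖) * (16 * (SubdAux.PK lam T * 1)) with hBH
      set C₁ : ℝ := Real.exp (-(|p| * ‖lam‖)) with hC₁
      set C₂ : ℝ := 2 * BH with hC₂
      have hpl0 : 0 ≤ |p| * ‖lam‖ := mul_nonneg (abs_nonneg p) (norm_nonneg lam)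
      have hC₁pos : 0 < C₁ := Real.exp_pos _
      have hC₁le1 : C₁ ≤ 1 := Real.exp_le_one_iff.mpr (by linarith)
      have hPK1 : 1 ≤ SubdAux.PK lam T := SubdAux.PK_one_le lam T
      have hexp1 : 1 ≤ Real.exp (|p| * ‖lam‖) := Real.one_le_exp hpl0
      have hBH1 : 1 ≤ BH := by rw [hBH]; nlinarith
      have hBH0 : 0 ≤ BH := by linarith
      refine ⟨C₁, C₂, hC₁pos, by rw [hC₂]; linarith, ?_⟩
      intro m c hBddc
      obtain ⟨Cc, hc⟩ : ∃ C : ℝ, ∀ i : ℤ, ‖c i‖ ≤ C := hBddc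
      set H : ℝ → ℂ := SubdAux.limitG p lam T m deltaC with hH
      have hbdd : BddAbove (Set.range fun i : ℤ => ‖c i‖) := by
        refine ⟨Cc, ?_⟩
        rintro _ ⟨i, rfl⟩
        exact hc i
      set Sc : ℝ := ⨆ i : ℤ, ‖c i‖ with hScdef
      have hSc : ∀ i : ℤ, ‖c i‖ ≤ Sc := fun i => le_ciSup hbdd i
      have hSc0 : 0 ≤ Sc := le_trans (norm_nonneg _) (hSc 0)
      have Hbound : ∀ y : ℝ, ‖H y‖ ≤ BH := fun y =>
        SubdAux.limitG_norm_le p lam T hT m deltaC zero_le_one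
          SubdAux.deltaC_norm_le y
      have Hzero : ∀ y : ℝ, 1 ≤ |y| → H y = 0 := fun y hy =>
        SubdAux.limitG_delta_supp p lam T m hy
      -- rewrite the finsum as a two-term sum
      have key : ∀ x : ℝ, (∑ᶠ i : ℤ, c i * H (x - (i:ℝ))) =
          ∑ j ∈ Finset.Icc ⌊x⌋ (⌊x⌋ + 1), c j * H (x - (j:ℝ)) := by
        intro x
        apply finsum_eq_finset_sum_of_support_subset
        intro i hi
        simp only [Function.mem_support] at hi
        by_contra hmem
        simp only [Finset.coe_Icc, Set.mem_Icc] at hmem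
        push_neg at hmem
        apply hi
        have habs : 1 ≤ |x - (i:ℝ)| := by
          rcases lt_or_ge i ⌊x⌋ with h' | h'
          · have : i ≤ ⌊x⌋ - 1 := by omega
            have hcast : (i:ℝ) ≤ (⌊x⌋:ℝ) - 1 := by exact_mod_cast this
            have := Int.floor_le x
            rw [abs_of_nonneg (by linarith)]
            linarith
          · have h'' : ⌊x⌋ + 2 ≤ i := by
              rcases lt_or_ge (⌊x⌋ + 1) i with h3 | h3
              · omega
              · exact absurd (hmem h') (by omega)
            have hcast : (⌊x⌋:ℝ) + 2 ≤ (i:ℝ) := by exact_mod_cast h''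
            have := Int.lt_floor_add_one x
            rw [abs_of_nonpos (by linarith)]
            linarith
        rw [Hzero _ habs, mul_zero]
      have Fbound : ∀ x : ℝ, ‖∑ᶠ i : ℤ, c i * H (x - (i:ℝ))‖ ≤ C₂ * Sc := by
        intro x
        rw [key x]
        have hcard : (Finset.Icc ⌊x⌋ (⌊x⌋ + 1)).card = 2 := by
          rw [Int.card_Icc]; omega
        calc ‖∑ j ∈ Finset.Icc ⌊x⌋ (⌊x⌋ + 1), c j * H (x - (j:ℝ))‖
            ≤ ∑ j ∈ Finset.Icc ⌊x⌋ (⌊x⌋ + 1), ‖c j * H (x - (j:ℝ))‖ := norm_sum_le _ _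
          _ ≤ ∑ _j ∈ Finset.Icc ⌊x⌋ (⌊x⌋ + 1), Sc * BH := by
              apply Finset.sum_le_sum
              intro j _
              rw [norm_mul]
              exact mul_le_mul (hSc j) (Hbound _) (norm_nonneg _) hSc0
          _ = 2 * (Sc * BH) := by rw [Finset.sum_const, hcard, nsmul_eq_mul]; norm_num
          _ = C₂ * Sc := by rw [hC₂]; ring
      have hFbdd : BddAbove (Set.range fun x : ℝ => ‖∑ᶠ i : ℤ, c i * H (x - (i:ℝ))‖) := by
        refine ⟨C₂ * Sc, ?_⟩
        rintro _ ⟨x, rfl⟩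
        exact Fbound x
      constructor
      · -- lower bound
        have Fint : ∀ j : ℤ, (∑ᶠ i : ℤ, c i * H ((j:ℝ) - (i:ℝ))) =
            c j * Complex.exp (-(p:ℂ) * lam * (2:ℂ) ^ (-(m:ℤ))) := by
          intro j
          rw [key (j:ℝ)]
          rw [Int.floor_intCast]
          have hset : Finset.Icc j (j + 1) = {j, j + 1} := by
            ext a; simp [Finset.mem_Icc]; omega
          rw [hset, Finset.sum_insert (by simp), Finset.sum_singleton]
          have e0 : (j:ℝ) - (j:ℝ) = ((0:ℤ):ℝ) := by push_cast; ring
          have em1 : (j:ℝ) - ((j + 1 : ℤ):ℝ) = ((-1:ℤ):ℝ) := by push_cast; ring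
          rw [e0, em1, hH, SubdAux.limitG_int p lam T hT m _ 0,
            SubdAux.limitG_int p lam T hT m _ (-1)]
          simp [deltaC]
        have hlow : ∀ j : ℤ, C₁ * ‖c j‖ ≤ ⨆ x : ℝ, ‖∑ᶠ i : ℤ, c i * H (x - (i:ℝ))‖ := by
          intro j
          have h1 : C₁ * ‖c j‖ ≤ ‖∑ᶠ i : ℤ, c i * H ((j:ℝ) - (i:ℝ))‖ := by
            rw [Fint j, norm_mul]
            have := SubdAux.norm_exp_factor_ge p lam m
            calc C₁ * ‖c j‖ ≤ ‖Complex.exp (-(p:ℂ) * lam * (2:ℂ) ^ (-(m:ℤ)))‖ * ‖c j‖ := by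
                  exact mul_le_mul_of_nonneg_right this (norm_nonneg _)
              _ = ‖c j‖ * ‖Complex.exp (-(p:ℂ) * lam * (2:ℂ) ^ (-(m:ℤ)))‖ := by ring
          exact le_trans h1 (le_ciSup hFbdd ((j:ℝ)))
        have hScle : Sc ≤ (⨆ x : ℝ, ‖∑ᶠ i : ℤ, c i * H (x - (i:ℝ))‖) / C₁ := by
          apply ciSup_le
          intro j
          rw [le_div_iff₀ hC₁pos]
          calc ‖c j‖ * C₁ = C₁ * ‖c j‖ := by ring
            _ ≤ _ := hlow j
        calc C₁ * Sc ≤ C₁ * ((⨆ x : ℝ, ‖∑ᶠ i : ℤ, c i * H (x - (i:ℝ))‖) / C₁) := by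
              exact mul_le_mul_of_nonneg_left hScle (le_of_lt hC₁pos)
          _ = ⨆ x : ℝ, ‖∑ᶠ i : ℤ, c i * H (x - (i:ℝ))‖ := by
              field_simp
      · exact ciSup_le Fbound
  · -- Clause 3: interpolatory
    rintro rfl f _ k i
    rw [SubdAux.subOpCC_even (SubdAux.hMask_small 0 lam k), SubdAux.hMask_e0, one_mul]


end
end

section
/- For p ∈ {0, −1/2} and λ ∈ ℂ, let H_{m,p}, m ≥ 0, be the level-m basic limit functions of the non-stationary scheme with k-level symbol h_p^{[k]}(z) = r_k^{−p}(1+r_k^{−1}z)(1+r_k z)/((r_k^{−1}+r_k)z), r_k = e^{λ2^{−k−1}}. Then each H_{m,p} is supported on [−1,1], lim_{m→∞} ‖H_{m,p} − H‖ = 0 where H is the linear B-spline (hat function) H(x) = max(0, 1−|x|) supported on [−1,1], and H_{m,p}(0) = (e^{λ2^{−m}})^{−p}; in particular H_{m,0}(0) = 1 for all m ≥ 0, while H_{m,−1/2}(0) → 1 as m → ∞. -/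
open Filter Topology

noncomputable section

namespace AuxHelp


/-- dyadic values of the hat function at level `l` -/
def Bs (l : ℕ) (i : ℤ) : ℂ := ((max 0 (2 ^ l - |i|) : ℤ) : ℂ) / 2 ^ l

lemma Bs_zero : Bs 0 = deltaC := by
  funext i
  simp only [Bs, deltaC, pow_zero]
  rcases eq_or_ne i 0 with h | h
  · simp [h]
  · have h1 : (1 : ℤ) ≤ |i| := Int.one_le_abs h
    have h2 : max 0 (1 - |i|) = 0 := by omega
    simp [h, h2]

lemma norm_Bs_le (l : ℕ) (i : ℤ) : ‖Bs l i‖ ≤ 1 := by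
  have h0 : (0 : ℤ) ≤ max 0 (2 ^ l - |i|) := le_max_left _ _
  have h1 : max 0 (2 ^ l - |i|) ≤ 2 ^ l := by
    have : (0:ℤ) ≤ |i| := abs_nonneg i
    have : (0:ℤ) < 2 ^ l := by positivity
    omega
  rw [Bs, norm_div]
  have e1 : ‖((max 0 (2 ^ l - |i|) : ℤ) : ℂ)‖ = ((max 0 (2 ^ l - |i|) : ℤ) : ℝ) := by
    rw [← Complex.ofReal_intCast, Complex.norm_real, Real.norm_eq_abs,
      abs_of_nonneg (by exact_mod_cast h0)]
  have e2 : ‖(2 : ℂ) ^ l‖ = (2 : ℝ) ^ l := by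
    rw [norm_pow, Complex.norm_ofNat]
  rw [e1, e2, div_le_one (by positivity)]
  exact_mod_cast h1

lemma Bs_even (l : ℕ) (j : ℤ) : Bs (l + 1) (2 * j) = Bs l j := by
  have key : max 0 ((2:ℤ) ^ (l+1) - |2 * j|) = 2 * max 0 ((2:ℤ) ^ l - |j|) := by
    obtain ⟨P, hP, hPl⟩ : ∃ P : ℤ, 0 < P ∧ (2:ℤ) ^ l = P := ⟨2 ^ l, by positivity, rfl⟩
    rw [pow_succ, hPl]
    rcases abs_cases j with ⟨h1, h1'⟩ | ⟨h1, h1'⟩ <;>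
      rcases abs_cases (2 * j) with ⟨h3, h3'⟩ | ⟨h3, h3'⟩ <;> omega
  have h2 : ((2:ℂ)) ^ l ≠ 0 := pow_ne_zero l two_ne_zero
  simp only [Bs, key]
  push_cast
  rw [pow_succ]
  field_simp

lemma Bs_odd (l : ℕ) (j : ℤ) : Bs (l + 1) (2 * j + 1) = (Bs l j + Bs l (j + 1)) / 2 := by
  have key : max 0 ((2:ℤ) ^ (l+1) - |2 * j + 1|)
      = max 0 ((2:ℤ) ^ l - |j|) + max 0 ((2:ℤ) ^ l - |j + 1|) := by
    obtain ⟨P, hP, hPl⟩ : ∃ P : ℤ, 0 < P ∧ (2:ℤ) ^ l = P := ⟨2 ^ l, by positivity, rfl⟩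
    rw [pow_succ, hPl]
    rcases abs_cases j with ⟨h1, h1'⟩ | ⟨h1, h1'⟩ <;>
      rcases abs_cases (j + 1) with ⟨h2, h2'⟩ | ⟨h2, h2'⟩ <;>
      rcases abs_cases (2 * j + 1) with ⟨h3, h3'⟩ | ⟨h3, h3'⟩ <;> omega
  have h2 : ((2:ℂ)) ^ l ≠ 0 := pow_ne_zero l two_ne_zero
  simp only [Bs, key]
  push_cast
  rw [pow_succ]
  field_simp
  try ring

lemma subOpCC_even (a : ℤ → ℂ) (ha : ∀ i : ℤ, 2 ≤ |i| → a i = 0) (f : ℤ → ℂ) (j : ℤ) :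
    subOpCC a f (2 * j) = a 0 * f j := by
  unfold subOpCC
  rw [finsum_eq_single _ j]
  · norm_num
  · intro t ht
    have h2 : (2:ℤ) ≤ |2 * j - 2 * t| := by
      rcases abs_cases (2 * j - 2 * t) with ⟨h3, h3'⟩ | ⟨h3, h3'⟩ <;> omega
    rw [ha _ h2, zero_mul]

lemma subOpCC_odd (a : ℤ → ℂ) (ha : ∀ i : ℤ, 2 ≤ |i| → a i = 0) (f : ℤ → ℂ) (j : ℤ) :
    subOpCC a f (2 * j + 1) = a 1 * f j + a (-1) * f (j + 1) := by
  unfold subOpCC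
  rw [finsum_eq_finset_sum_of_support_subset _ (s := {j, j + 1}) ?_, Finset.sum_pair (by omega)]
  · have e1 : 2 * j + 1 - 2 * j = (1:ℤ) := by ring
    have e2 : 2 * j + 1 - 2 * (j + 1) = (-1:ℤ) := by ring
    rw [e1, e2]
  · intro t ht
    simp only [Function.mem_support] at ht
    simp only [Finset.coe_insert, Finset.coe_singleton, Set.mem_insert_iff,
      Set.mem_singleton_iff]
    by_contra hc
    push_neg at hc
    apply ht
    have h2 : (2:ℤ) ≤ |2 * j + 1 - 2 * t| := by
      rcases abs_cases (2 * j + 1 - 2 * t) with ⟨h3, h3'⟩ | ⟨h3, h3'⟩ <;> omega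
    rw [ha _ h2, zero_mul]




lemma hMask_support (p : ℝ) (lam : ℂ) (k : ℕ) : ∀ i : ℤ, 2 ≤ |i| → hMask p lam k i = 0 := by
  intro i hi
  have h0 : i ≠ 0 := by rcases abs_cases i with ⟨h, h'⟩ | ⟨h, h'⟩ <;> omega
  have h1 : ¬(i = 1 ∨ i = -1) := by rcases abs_cases i with ⟨h, h'⟩ | ⟨h, h'⟩ <;> omega
  simp only [hMask, if_neg h0, if_neg h1]

lemma norm_two_zpow (k : ℕ) : ‖(2 : ℂ) ^ (-(k : ℤ) - 1)‖ = (1/2 : ℝ) ^ (k + 1) := by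
  rw [show (-(k:ℤ) - 1 : ℤ) = -((k + 1 : ℕ) : ℤ) by push_cast; ring, zpow_neg, zpow_natCast,
    norm_inv, norm_pow, Complex.norm_ofNat, one_div, inv_pow]

lemma exp_sub_one (z : ℂ) (h : ‖z‖ ≤ 1) : ‖Complex.exp z - 1‖ ≤ 2 * ‖z‖ := by
  exact Complex.norm_exp_sub_one_le h

lemma mask0_est (p : ℝ) (lam : ℂ) (k : ℕ) (hp : |p| ≤ 1)
    (hw : ‖lam‖ * (1/2 : ℝ) ^ (k + 1) ≤ 1/4) :
    ‖hMask p lam k 0 - 1‖ ≤ 2 * (‖lam‖ * (1/2 : ℝ) ^ (k + 1)) := by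
  have hz : ‖-(p : ℂ) * lam * (2 : ℂ) ^ (-(k : ℤ) - 1)‖ ≤ ‖lam‖ * (1/2 : ℝ) ^ (k + 1) := by
    rw [norm_mul, norm_mul, norm_neg, Complex.norm_real, Real.norm_eq_abs, norm_two_zpow]
    have h1 : (0:ℝ) ≤ ‖lam‖ * (1/2 : ℝ) ^ (k+1) := by positivity
    nlinarith [abs_nonneg p, norm_nonneg lam, pow_nonneg (show (0:ℝ) ≤ 1/2 by norm_num) (k+1)]
  have h1 := exp_sub_one _ (hz.trans (by linarith))
  rw [show hMask p lam k 0 = Complex.exp (-(p : ℂ) * lam * (2 : ℂ) ^ (-(k : ℤ) - 1)) by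
    simp [hMask]]
  linarith

lemma mask1_est (p : ℝ) (lam : ℂ) (k : ℕ) (hp : |p| ≤ 1)
    (hw : ‖lam‖ * (1/2 : ℝ) ^ (k + 1) ≤ 1/4) (i : ℤ) (hi : i = 1 ∨ i = -1) :
    ‖hMask p lam k i - 1/2‖ ≤ 4 * (‖lam‖ * (1/2 : ℝ) ^ (k + 1)) := by
  set W := ‖lam‖ * (1/2 : ℝ) ^ (k + 1) with hW
  have hW0 : 0 ≤ W := by positivity
  set t := (2 : ℂ) ^ (-(k : ℤ) - 1) with ht
  set w := lam * t with hwdef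
  have hnw : ‖w‖ = W := by rw [hwdef, norm_mul, norm_two_zpow]
  have hin : i ≠ 0 := by rcases hi with h | h <;> omega
  have hval : hMask p lam k i = Complex.exp (-(p : ℂ) * lam * t) / ((Complex.exp w)⁻¹ + Complex.exp w) := by
    simp only [hMask, if_neg hin, if_pos hi, ht, hwdef]
  set c := Complex.exp (-(p : ℂ) * lam * t) with hc
  set D := (Complex.exp w)⁻¹ + Complex.exp w with hD
  have e1 : ‖Complex.exp w - 1‖ ≤ 2 * W := by
    have := exp_sub_one w (by rw [hnw]; linarith)
    rw [hnw] at this; exact this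
  have e2 : ‖Complex.exp (-w) - 1‖ ≤ 2 * W := by
    have := exp_sub_one (-w) (by rw [norm_neg, hnw]; linarith)
    rw [norm_neg, hnw] at this; exact this
  have e3 : ‖c - 1‖ ≤ 2 * W := by
    have hz : ‖-(p : ℂ) * lam * t‖ ≤ W := by
      rw [norm_mul, norm_mul, norm_neg, Complex.norm_real, Real.norm_eq_abs, ht, norm_two_zpow, hW]
      nlinarith [abs_nonneg p, norm_nonneg lam, pow_nonneg (show (0:ℝ) ≤ 1/2 by norm_num) (k+1)]
    have := exp_sub_one _ (hz.trans (by linarith))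
    rw [hc]
    linarith
  have hD2 : ‖D - 2‖ ≤ 4 * W := by
    have : D - 2 = (Complex.exp (-w) - 1) + (Complex.exp w - 1) := by
      rw [hD, Complex.exp_neg]; ring
    rw [this]
    calc ‖(Complex.exp (-w) - 1) + (Complex.exp w - 1)‖
        ≤ ‖Complex.exp (-w) - 1‖ + ‖Complex.exp w - 1‖ := norm_add_le _ _
      _ ≤ 4 * W := by linarith
  have hDn : 1 ≤ ‖D‖ := by
    have h1 : ‖(2:ℂ)‖ - ‖D‖ ≤ ‖(2:ℂ) - D‖ := by
      have := norm_sub_norm_le (2:ℂ) D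
      linarith
    rw [norm_sub_rev] at h1
    have h2 : ‖(2:ℂ)‖ = 2 := by simp
    linarith
  have hDne : D ≠ 0 := by
    intro h
    rw [h, norm_zero] at hDn
    linarith
  have hsplit : c / D - 1/2 = (2 * c - D) / (2 * D) := by
    field_simp
  have hnum : ‖2 * c - D‖ ≤ 8 * W := by
    have : 2 * c - D = 2 * (c - 1) - (D - 2) := by ring
    rw [this]
    calc ‖2 * (c - 1) - (D - 2)‖ ≤ ‖2 * (c - 1)‖ + ‖D - 2‖ := norm_sub_le _ _
      _ = 2 * ‖c - 1‖ + ‖D - 2‖ := by rw [norm_mul, Complex.norm_ofNat]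
      _ ≤ 8 * W := by linarith
  have hden : 2 ≤ ‖2 * D‖ := by
    rw [norm_mul, Complex.norm_ofNat]; linarith
  rw [hval, hsplit, norm_div]
  calc ‖2 * c - D‖ / ‖2 * D‖ ≤ (8 * W) / 2 :=
        div_le_div₀ (by positivity) hnum (by norm_num) hden
    _ = 4 * W := by ring


lemma subIter_succ (p : ℝ) (lam : ℂ) (m l : ℕ) :
    subIterCC (hMask p lam) m (l + 1) deltaC
      = subOpCC (hMask p lam (m + l)) (subIterCC (hMask p lam) m l deltaC) := rfl

lemma F_support (p : ℝ) (lam : ℂ) (m : ℕ) :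
    ∀ l (i : ℤ), (2:ℤ) ^ l ≤ |i| → subIterCC (hMask p lam) m l deltaC i = 0 := by
  intro l
  induction l with
  | zero =>
    intro i hi
    have : i ≠ 0 := by rcases abs_cases i with ⟨h, h'⟩ | ⟨h, h'⟩ <;> omega
    simp [deltaC, subIterCC, this]
  | succ l ih =>
    intro i hi
    have hP : (0:ℤ) < 2 ^ l := by positivity
    have hpow : (2:ℤ) ^ (l+1) = 2 ^ l * 2 := by rw [pow_succ]
    rw [subIter_succ]
    rcases Int.even_or_odd i with ⟨j, hj⟩ | ⟨j, hj⟩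
    · have hij : i = 2 * j := by omega
      rw [hij] at hi
      rw [hij, subOpCC_even _ (hMask_support p lam (m + l))]
      rw [ih j (by
        rcases abs_cases j with ⟨h1, h1'⟩ | ⟨h1, h1'⟩ <;>
          rcases abs_cases (2*j) with ⟨h3, h3'⟩ | ⟨h3, h3'⟩ <;> omega), mul_zero]
    · have hij : i = 2 * j + 1 := hj
      rw [hij] at hi
      have hkey : (2:ℤ)^l ≤ |j| ∧ (2:ℤ)^l ≤ |j+1| := by
        rcases abs_cases j with ⟨h1, h1'⟩ | ⟨h1, h1'⟩ <;>
          rcases abs_cases (j+1) with ⟨h2, h2'⟩ | ⟨h2, h2'⟩ <;>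
          rcases abs_cases (2*j+1) with ⟨h3, h3'⟩ | ⟨h3, h3'⟩ <;> omega
      rw [hij, subOpCC_odd _ (hMask_support p lam (m + l)), ih j hkey.1, ih (j+1) hkey.2,
        mul_zero, mul_zero, add_zero]

lemma F_zero (p : ℝ) (lam : ℂ) (m : ℕ) :
    ∀ l, subIterCC (hMask p lam) m l deltaC 0
      = Complex.exp (-(p:ℂ) * lam * ((2:ℂ) ^ (-(m:ℤ)) - (2:ℂ) ^ (-(m:ℤ) - (l:ℤ)))) := by
  intro l
  induction l with
  | zero =>
    simp [subIterCC, deltaC]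
  | succ l ih =>
    rw [subIter_succ, show (0:ℤ) = 2 * 0 by ring, subOpCC_even _ (hMask_support p lam (m + l)),
      show (2 * 0 : ℤ) = 0 by ring] at *
    rw [ih, show hMask p lam (m + l) 0
        = Complex.exp (-(p : ℂ) * lam * (2 : ℂ) ^ (-((m + l : ℕ) : ℤ) - 1)) by simp [hMask],
      ← Complex.exp_add]
    congr 1
    have h2 : ((2:ℂ)) ^ (-(m:ℤ) - (l:ℤ) - 1) * 2 = (2:ℂ) ^ (-(m:ℤ) - (l:ℤ)) := by
      rw [zpow_sub_one₀ (two_ne_zero)]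
      field_simp
    rw [show (-((m + l : ℕ) : ℤ) - 1 : ℤ) = -(m:ℤ) - (l:ℤ) - 1 by push_cast; ring,
      show (-(m:ℤ) - ((l+1 : ℕ) : ℤ) : ℤ) = -(m:ℤ) - (l:ℤ) - 1 by push_cast; ring]
    linear_combination (-(p:ℂ) * lam) * h2

lemma main_est (p : ℝ) (lam : ℂ) (hp : |p| ≤ 1) (m : ℕ)
    (hm : 16 * ‖lam‖ * (1/2:ℝ) ^ m ≤ 1) :
    ∀ l (i : ℤ), ‖subIterCC (hMask p lam) m l deltaC i - Bs l i‖ ≤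
      16 * ‖lam‖ * (1/2:ℝ) ^ m * (1 - (1/2:ℝ) ^ l) := by
  intro l
  induction l with
  | zero => intro i; rw [Bs_zero]; simp [subIterCC]
  | succ l ih =>
    intro i
    have hL0 : (0:ℝ) ≤ ‖lam‖ := norm_nonneg lam
    have hp2 : (0:ℝ) ≤ (1/2:ℝ) ^ m := by positivity
    have hpl : (0:ℝ) ≤ (1/2:ℝ) ^ l := by positivity
    have hpl1 : (1/2:ℝ) ^ l ≤ 1 := pow_le_one₀ (by norm_num) (by norm_num)
    have epow : (1/2:ℝ) ^ (m + l + 1) = (1/2) ^ m * (1/2) ^ l * (1/2) := by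
      rw [pow_succ, pow_add]
    have hw : ‖lam‖ * (1/2:ℝ) ^ (m + l + 1) ≤ 1/4 := by nlinarith
    have hFb : ∀ j : ℤ, ‖subIterCC (hMask p lam) m l deltaC j‖ ≤ 2 := by
      intro j
      have h1 := ih j
      have h2 := norm_Bs_le l j
      have h3 := norm_sub_norm_le (subIterCC (hMask p lam) m l deltaC j) (Bs l j)
      nlinarith
    rw [subIter_succ]
    rcases Int.even_or_odd i with ⟨j, hj⟩ | ⟨j, hj⟩
    · rw [show i = 2 * j by omega, subOpCC_even _ (hMask_support p lam (m + l)), Bs_even]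
      have key : hMask p lam (m+l) 0 * subIterCC (hMask p lam) m l deltaC j - Bs l j
          = (hMask p lam (m+l) 0 - 1) * subIterCC (hMask p lam) m l deltaC j
            + (subIterCC (hMask p lam) m l deltaC j - Bs l j) := by ring
      rw [key]
      have h1 : ‖(hMask p lam (m+l) 0 - 1) * subIterCC (hMask p lam) m l deltaC j‖
          ≤ 2 * (‖lam‖ * (1/2:ℝ) ^ (m + l + 1)) * 2 := by
        rw [norm_mul]
        exact mul_le_mul (mask0_est p lam (m+l) hp hw) (hFb j) (norm_nonneg _) (by positivity)
      have h2 := ih j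
      have h3 := norm_add_le ((hMask p lam (m+l) 0 - 1) * subIterCC (hMask p lam) m l deltaC j)
        (subIterCC (hMask p lam) m l deltaC j - Bs l j)
      have e2 : (1/2:ℝ) ^ (l+1) = (1/2) ^ l * (1/2) := pow_succ _ _
      rw [e2]
      nlinarith [mul_nonneg (mul_nonneg hL0 hp2) hpl]
    · rw [hj, subOpCC_odd _ (hMask_support p lam (m + l)), Bs_odd]
      set F := subIterCC (hMask p lam) m l deltaC with hF
      set A := hMask p lam (m+l) 1 with hA
      set B := hMask p lam (m+l) (-1) with hB
      have key : A * F j + B * F (j+1) - (Bs l j + Bs l (j+1)) / 2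
          = (A - 1/2) * F j + (B - 1/2) * F (j+1)
            + ((F j - Bs l j) + (F (j+1) - Bs l (j+1))) / 2 := by ring
      rw [key]
      have h1 : ‖(A - 1/2) * F j‖ ≤ 4 * (‖lam‖ * (1/2:ℝ) ^ (m + l + 1)) * 2 := by
        rw [norm_mul]
        exact mul_le_mul (mask1_est p lam (m+l) hp hw 1 (Or.inl rfl)) (hFb j)
          (norm_nonneg _) (by positivity)
      have h2 : ‖(B - 1/2) * F (j+1)‖ ≤ 4 * (‖lam‖ * (1/2:ℝ) ^ (m + l + 1)) * 2 := by
        rw [norm_mul]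
        exact mul_le_mul (mask1_est p lam (m+l) hp hw (-1) (Or.inr rfl)) (hFb (j+1))
          (norm_nonneg _) (by positivity)
      have h3 : ‖((F j - Bs l j) + (F (j+1) - Bs l (j+1))) / 2‖
          ≤ (16 * ‖lam‖ * (1/2:ℝ) ^ m * (1 - (1/2:ℝ) ^ l)) := by
        rw [norm_div, Complex.norm_ofNat]
        have := norm_add_le (F j - Bs l j) (F (j+1) - Bs l (j+1))
        have i1 := ih j
        have i2 := ih (j+1)
        rw [div_le_iff₀ (by norm_num)]
        linarith
      have h4 := norm_add₃_le (a := (A - 1/2) * F j) (b := (B - 1/2) * F (j+1))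
        (c := ((F j - Bs l j) + (F (j+1) - Bs l (j+1))) / 2)
      have e2 : (1/2:ℝ) ^ (l+1) = (1/2) ^ l * (1/2) := pow_succ _ _
      rw [e2]
      nlinarith [mul_nonneg (mul_nonneg hL0 hp2) hpl]


lemma pt_bound (G : ℝ → ℂ) (x : ℝ) (hc : ContinuousAt G x) (C : ℝ)
    (h : ∀ ε > (0:ℝ), ∃ L : ℕ, ∀ l ≥ L, ∀ i : ℤ,
      |(i:ℝ)/2^(l+1) - x| < (1/2:ℝ)^(l+1) → ‖G ((i:ℝ)/2^(l+1))‖ ≤ C + ε) :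
    ‖G x‖ ≤ C := by
  refine le_of_forall_pos_le_add (fun ε hε => ?_)
  obtain ⟨δ, hδ, hδ'⟩ := Metric.continuousAt_iff.1 hc (ε/3) (by linarith)
  obtain ⟨L, hL⟩ := h (ε/3) (by linarith)
  obtain ⟨n, hn⟩ := exists_pow_lt_of_lt_one hδ (show (1/2:ℝ) < 1 by norm_num)
  set l := max L n with hl
  set i : ℤ := ⌊x * 2^(l+1)⌋ with hi
  set y : ℝ := (i:ℝ)/2^(l+1) with hy
  have h2 : (0:ℝ) < 2^(l+1) := by positivity
  have hhalf : (1/2:ℝ)^(l+1) * 2^(l+1) = 1 := by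
    rw [one_div, inv_pow, inv_mul_cancel₀ (by positivity)]
  have hxy : |y - x| < (1/2:ℝ)^(l+1) := by
    have e : y - x = -((x * 2^(l+1) - i)/2^(l+1)) := by
      rw [hy]; field_simp; ring
    rw [e, abs_neg, abs_div, abs_of_pos h2, div_lt_iff₀ h2]
    have h1 : |x * 2^(l+1) - i| < 1 := by
      rw [abs_of_nonneg (by linarith [Int.floor_le (x * 2^(l+1))])]
      linarith [Int.lt_floor_add_one (x * 2^(l+1))]
    linarith [hhalf]
  have hpow : (1/2:ℝ)^(l+1) ≤ (1/2:ℝ)^n :=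
    pow_le_pow_of_le_one (by norm_num) (by norm_num)
      (le_trans (le_max_right L n) (Nat.le_succ_of_le le_rfl))
  have hyd : dist y x < δ := by
    rw [Real.dist_eq]
    calc |y - x| < (1/2:ℝ)^(l+1) := hxy
      _ ≤ (1/2:ℝ)^n := hpow
      _ < δ := hn
  have hGy : ‖G y‖ ≤ C + ε/3 := hL l (le_max_left L n) i hxy
  have hd := hδ' hyd
  rw [dist_eq_norm] at hd
  have : ‖G x‖ ≤ ‖G y‖ + ‖G x - G y‖ := by
    have := norm_add_le (G y) (G x - G y)
    simpa using this
  rw [norm_sub_rev] at hd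
  linarith


lemma hat_dyadic (l : ℕ) (i : ℤ) :
    ((max 0 (1 - |(i:ℝ)/2^(l+1)|) : ℝ) : ℂ) = Bs (l+1) i := by
  have h2 : (0:ℝ) < 2^(l+1) := by positivity
  have habs : |(i:ℝ)/2^(l+1)| = |(i:ℝ)|/2^(l+1) := by
    rw [abs_div, abs_of_pos h2]
  have key : max 0 (1 - |(i:ℝ)|/2^(l+1)) = (max 0 ((2:ℝ)^(l+1) - |(i:ℝ)|))/2^(l+1) := by
    rw [← max_div_div_right h2.le, zero_div]
    congr 1
    field_simp
  have hcast : ((max 0 ((2:ℤ)^(l+1) - |i|) : ℤ) : ℝ) = max 0 ((2:ℝ)^(l+1) - |(i:ℝ)|) := by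
    push_cast [Int.cast_max]
    rfl
  rw [habs, key, Bs, ← Complex.ofReal_intCast, hcast]
  push_cast
  rfl


lemma exists_K (lam : ℂ) : ∃ K : ℕ, (16:ℝ) * ‖lam‖ * (1/2)^K ≤ 1 := by
  obtain ⟨n, hn⟩ := exists_pow_lt_of_lt_one
    (show (0:ℝ) < 1/(16*‖lam‖+1) by positivity) (show (1/2:ℝ) < 1 by norm_num)
  rw [lt_div_iff₀ (by positivity)] at hn
  refine ⟨n, ?_⟩
  nlinarith [pow_nonneg (show (0:ℝ) ≤ 1/2 by norm_num) n, norm_nonneg lam]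

end AuxHelp

/-- (Proposition 4.1(b): the basic limit functions `H_{m,p}` of the auxiliary
scheme are supported on `[−1,1]`, converge uniformly to the hat function
`H(x) = max(0, 1−|x|)`, and satisfy `H_{m,p}(0) = (e^{λ2^{−m}})^{−p}`; in particular
`H_{m,0}(0) = 1` for all `m`, and `H_{m,−1/2}(0) → 1` as `m → ∞`). -/
theorem auxiliary_scheme_basic_limit_functions
    (p : ℝ) (hp : p = 0 ∨ p = -(1 / 2)) (lam : ℂ)
    (H : ℕ → ℝ → ℂ)
    (hH : ∀ m : ℕ, Continuous (H m) ∧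
      ∀ ε > (0 : ℝ), ∃ L : ℕ, ∀ l ≥ L, ∀ i : ℤ,
        ‖H m ((i : ℝ) / 2 ^ (l + 1)) - subIterCC (hMask p lam) m (l + 1) deltaC i‖ < ε) :
    (∀ m : ℕ, ∀ x : ℝ, x ∉ Set.Icc (-1 : ℝ) 1 → H m x = 0) ∧
    Tendsto (fun m : ℕ => ⨆ x : ℝ, ‖H m x - ((max 0 (1 - |x|) : ℝ) : ℂ)‖)
      atTop (nhds 0) ∧
    (∀ m : ℕ, H m 0 = Complex.exp (-(p : ℂ) * lam * (2 : ℂ) ^ (-(m : ℤ)))) ∧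
    (p = 0 → ∀ m : ℕ, H m 0 = 1) ∧
    (p = -(1 / 2) → Tendsto (fun m : ℕ => H m 0) atTop (nhds 1)) := by
  classical
  have hp1 : |p| ≤ 1 := by rcases hp with h | h <;> rw [h, abs_le] <;> constructor <;> norm_num
  -- Part 1 : support
  have part1 : ∀ m : ℕ, ∀ x : ℝ, x ∉ Set.Icc (-1 : ℝ) 1 → H m x = 0 := by
    intro m x hx
    have h1x : 1 < |x| := by
      rw [Set.mem_Icc] at hx; push_neg at hx
      rcases le_or_gt (-1 : ℝ) x with h | h
      · exact lt_of_lt_of_le (hx h) (le_abs_self x)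
      · rw [abs_of_neg (by linarith)]; linarith
    have hb : ‖H m x‖ ≤ 0 := by
      apply AuxHelp.pt_bound (H m) x ((hH m).1.continuousAt) 0
      intro ε hε
      obtain ⟨L₁, hL₁⟩ := (hH m).2 ε hε
      obtain ⟨n₂, hn₂⟩ := exists_pow_lt_of_lt_one
        (show (0:ℝ) < |x| - 1 by linarith) (show (1/2:ℝ) < 1 by norm_num)
      refine ⟨max L₁ n₂, fun l hl i hnear => ?_⟩
      have hl1 : L₁ ≤ l := le_trans (le_max_left _ _) hl
      have hl2 : n₂ ≤ l := le_trans (le_max_right _ _) hl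
      have hyabs : 1 < |(i:ℝ)/2^(l+1)| := by
        have h1 : |x| - |(i:ℝ)/2^(l+1)| ≤ |x - (i:ℝ)/2^(l+1)| := abs_sub_abs_le_abs_sub _ _
        have h2 : |x - (i:ℝ)/2^(l+1)| = |(i:ℝ)/2^(l+1) - x| := abs_sub_comm _ _
        have h3 : (1/2:ℝ)^(l+1) ≤ (1/2)^n₂ :=
          pow_le_pow_of_le_one (by norm_num) (by norm_num) (le_trans hl2 (Nat.le_succ l))
        linarith
      have hiz : (2:ℤ)^(l+1) ≤ |i| := by
        have h2p : (0:ℝ) < 2^(l+1) := by positivity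
        have h4 : (2:ℝ)^(l+1) ≤ |(i:ℝ)| := by
          rw [abs_div, abs_of_pos h2p, lt_div_iff₀ h2p] at hyabs
          linarith
        exact_mod_cast h4
      have hF0 : subIterCC (hMask p lam) m (l+1) deltaC i = 0 :=
        AuxHelp.F_support p lam m (l+1) i hiz
      have h5 := hL₁ l hl1 i
      rw [hF0, sub_zero] at h5
      linarith [h5.le]
    exact norm_le_zero_iff.1 hb
  -- Part 3 : value at zero
  have part3 : ∀ m : ℕ, H m 0 = Complex.exp (-(p:ℂ) * lam * (2:ℂ) ^ (-(m:ℤ))) := by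
    intro m
    have T1 : Tendsto (fun l : ℕ => subIterCC (hMask p lam) m (l+1) deltaC 0)
        atTop (nhds (H m 0)) := by
      rw [NormedAddCommGroup.tendsto_atTop]
      intro ε hε
      obtain ⟨L, hL⟩ := (hH m).2 ε hε
      refine ⟨L, fun l hl => ?_⟩
      have h1 := hL l hl 0
      rw [Int.cast_zero, zero_div] at h1
      rw [norm_sub_rev]
      exact h1
    have T2 : Tendsto (fun l : ℕ => subIterCC (hMask p lam) m (l+1) deltaC 0) atTop
        (nhds (Complex.exp (-(p:ℂ) * lam * (2:ℂ) ^ (-(m:ℤ))))) := by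
      have hrw : (fun l : ℕ => subIterCC (hMask p lam) m (l+1) deltaC 0)
          = fun l : ℕ => Complex.exp (-(p:ℂ) * lam *
              ((2:ℂ) ^ (-(m:ℤ)) - (2:ℂ) ^ (-(m:ℤ) - ((l+1:ℕ):ℤ)))) := by
        funext l; exact AuxHelp.F_zero p lam m (l+1)
      rw [hrw]
      have hu : Tendsto (fun l : ℕ => (2:ℂ) ^ (-(m:ℤ) - ((l+1:ℕ):ℤ))) atTop (nhds 0) := by
        rw [tendsto_zero_iff_norm_tendsto_zero]
        have heq : (fun l : ℕ => ‖(2:ℂ) ^ (-(m:ℤ) - ((l+1:ℕ):ℤ))‖)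
            = fun l : ℕ => (1/2:ℝ) ^ (m+l+1) := by
          funext l
          rw [show (-(m:ℤ) - ((l+1:ℕ):ℤ)) = -(((m+l:ℕ)):ℤ) - 1 by push_cast; ring]
          exact AuxHelp.norm_two_zpow (m+l)
        rw [heq]
        apply squeeze_zero (g := fun l : ℕ => (1/2:ℝ)^l) (fun l => by positivity)
          (fun l => pow_le_pow_of_le_one (by norm_num) (by norm_num) (by omega))
        exact tendsto_pow_atTop_nhds_zero_of_lt_one (by norm_num) (by norm_num)
      have hexp : Tendsto (fun l : ℕ => -(p:ℂ) * lam *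
          ((2:ℂ) ^ (-(m:ℤ)) - (2:ℂ) ^ (-(m:ℤ) - ((l+1:ℕ):ℤ)))) atTop
          (nhds (-(p:ℂ) * lam * (2:ℂ) ^ (-(m:ℤ)))) := by
        have h := (tendsto_const_nhds (x := (2:ℂ) ^ (-(m:ℤ))) (f := atTop)).sub hu
        have h2 := h.const_mul (-(p:ℂ) * lam)
        simpa using h2
      exact (Complex.continuous_exp.tendsto _).comp hexp
    exact tendsto_nhds_unique T1 T2
  refine ⟨part1, ?_, part3, ?_, ?_⟩
  · -- Part 2 : uniform convergence to the hat function
    obtain ⟨K, hK⟩ := AuxHelp.exists_K lam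
    have hptw : ∀ m, K ≤ m → ∀ x : ℝ,
        ‖H m x - ((max 0 (1 - |x|) : ℝ) : ℂ)‖ ≤ 16 * ‖lam‖ * (1/2:ℝ)^m := by
      intro m hm x
      have hm1 : 16 * ‖lam‖ * (1/2:ℝ)^m ≤ 1 := by
        have h5 : (1/2:ℝ)^m ≤ (1/2)^K :=
          pow_le_pow_of_le_one (by norm_num) (by norm_num) hm
        nlinarith [norm_nonneg lam]
      apply AuxHelp.pt_bound (fun x => H m x - ((max 0 (1 - |x|) : ℝ) : ℂ)) x
        (Continuous.continuousAt ((hH m).1.sub (Complex.continuous_ofReal.comp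
          (continuous_const.max (continuous_const.sub continuous_abs)))))
      intro ε hε
      obtain ⟨L, hL⟩ := (hH m).2 ε hε
      refine ⟨L, fun l hl i _ => ?_⟩
      have h1 := hL l hl i
      have h2 := AuxHelp.main_est p lam hp1 m hm1 (l+1) i
      have h3 := AuxHelp.hat_dyadic l i
      have key : H m ((i:ℝ)/2^(l+1)) - ((max 0 (1 - |(i:ℝ)/2^(l+1)|) : ℝ) : ℂ)
          = (H m ((i:ℝ)/2^(l+1)) - subIterCC (hMask p lam) m (l+1) deltaC i)
            + (subIterCC (hMask p lam) m (l+1) deltaC i - AuxHelp.Bs (l+1) i) := by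
        rw [h3]; ring
      show ‖H m ((i:ℝ)/2^(l+1)) - ((max 0 (1 - |(i:ℝ)/2^(l+1)|) : ℝ) : ℂ)‖
          ≤ 16 * ‖lam‖ * (1/2:ℝ)^m + ε
      rw [key]
      have h4 := norm_add_le
        (H m ((i:ℝ)/2^(l+1)) - subIterCC (hMask p lam) m (l+1) deltaC i)
        (subIterCC (hMask p lam) m (l+1) deltaC i - AuxHelp.Bs (l+1) i)
      have h6 : (0:ℝ) ≤ 16 * ‖lam‖ * (1/2:ℝ)^m * ((1/2:ℝ)^(l+1)) := by positivity
      nlinarith [norm_nonneg lam]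
    have htends : Tendsto (fun m : ℕ => 16 * ‖lam‖ * (1/2:ℝ)^m) atTop (nhds 0) := by
      have h := (tendsto_pow_atTop_nhds_zero_of_lt_one
        (show (0:ℝ) ≤ 1/2 by norm_num) (show (1/2:ℝ) < 1 by norm_num)).const_mul (16 * ‖lam‖)
      simpa using h
    apply tendsto_of_tendsto_of_tendsto_of_le_of_le' tendsto_const_nhds htends
    · filter_upwards [eventually_ge_atTop K] with m hm
      have hbdd : BddAbove (Set.range fun x : ℝ => ‖H m x - ((max 0 (1 - |x|) : ℝ) : ℂ)‖) := by
        refine ⟨16 * ‖lam‖ * (1/2:ℝ)^m, ?_⟩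
        rintro _ ⟨x, rfl⟩
        exact hptw m hm x
      exact (norm_nonneg _).trans (le_ciSup hbdd (0:ℝ))
    · filter_upwards [eventually_ge_atTop K] with m hm
      exact ciSup_le fun x => hptw m hm x
  · -- Part 4
    intro hp0 m
    rw [part3 m, hp0]
    norm_num
  · -- Part 5
    intro _
    have hrw : (fun m : ℕ => H m 0)
        = fun m : ℕ => Complex.exp (-(p:ℂ) * lam * (2:ℂ) ^ (-(m:ℤ))) := funext part3
    rw [hrw]
    have hu : Tendsto (fun m : ℕ => (2:ℂ) ^ (-(m:ℤ))) atTop (nhds 0) := by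
      rw [tendsto_zero_iff_norm_tendsto_zero]
      have heq : (fun m : ℕ => ‖(2:ℂ) ^ (-(m:ℤ))‖) = fun m : ℕ => (1/2:ℝ)^m := by
        funext m
        rw [zpow_neg, zpow_natCast, norm_inv, norm_pow, Complex.norm_ofNat, one_div, inv_pow]
      rw [heq]
      exact tendsto_pow_atTop_nhds_zero_of_lt_one (by norm_num) (by norm_num)
    have hexp : Tendsto (fun m : ℕ => -(p:ℂ) * lam * (2:ℂ) ^ (-(m:ℤ))) atTop (nhds 0) := by
      have h := hu.const_mul (-(p:ℂ) * lam)
      simpa using h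
    have := (Complex.continuous_exp.tendsto 0).comp hexp
    simpa [Complex.exp_zero, Function.comp_def] using this


end
end

section
/- Let a and b be finitely supported (possibly complex-valued) masks whose symbols satisfy a(z) = (1 + r z) b(z) for some r ∈ ℂ \ {0}. Then for every bounded sequence f and every i ∈ ℤ, (S_a f)_i − r (S_a f)_{i−1} = (S_b g)_i, where g is the sequence g_j = f_j − r² f_{j−1}. In other words, applying the backward difference with weight r after subdivision by a equals subdividing by b the backward difference with weight r² of the data. -/
open Filter Topology

noncomputable section

/-- The symbol of a complex mask. -/
def symbolC (a : ℤ → ℂ) (z : ℂ) : ℂ := ∑ᶠ i : ℤ, a i * z ^ i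


private lemma suppFinAux (b : ℤ → ℂ) (hb : (Function.support b).Finite) (s : ℤ) (g : ℤ → ℂ) :
    (Function.support fun j : ℤ => b (s - 2 * j) * g j).Finite := by
  have hinj : Set.InjOn (fun j : ℤ => s - 2 * j)
      ((fun j : ℤ => s - 2 * j) ⁻¹' Function.support b) := fun x _ y _ h => by
    simp only at h; omega
  refine (hb.preimage hinj).subset ?_
  intro j hj
  simp only [Set.mem_preimage, Function.mem_support] at hj ⊢
  exact fun h0 => hj (by rw [h0, zero_mul])

private lemma coeffZero (c : ℤ → ℂ) (hc : (Function.support c).Finite)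
    (h : ∀ z : ℂ, z ≠ 0 → (∑ᶠ i : ℤ, c i * z ^ i) = 0) : ∀ i : ℤ, c i = 0 := by
  classical
  set s : Finset ℤ := hc.toFinset with hs
  have hmem : ∀ i : ℤ, i ∈ s ↔ c i ≠ 0 := by
    intro i; simp [hs, Set.Finite.mem_toFinset, Function.mem_support]
  set N : ℕ := s.sup (fun i => i.natAbs) with hN
  have hnonneg : ∀ i ∈ s, 0 ≤ i + (N : ℤ) := by
    intro i hi
    have h2 : i.natAbs ≤ N := Finset.le_sup (f := fun i : ℤ => i.natAbs) hi
    omega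
  set P : Polynomial ℂ := ∑ i ∈ s, Polynomial.C (c i) * Polynomial.X ^ (i + (N : ℤ)).toNat
    with hP
  have hPeval : ∀ z : ℂ, z ≠ 0 → P.eval z = 0 := by
    intro z hz
    have h1 : P.eval z = ∑ i ∈ s, c i * z ^ ((i + (N : ℤ)).toNat) := by
      simp [hP, Polynomial.eval_finset_sum]
    have h2 : ∀ i ∈ s, c i * z ^ ((i + (N : ℤ)).toNat) = (c i * z ^ i) * z ^ (N : ℤ) := by
      intro i hi
      have hzp : (z : ℂ) ^ ((i + (N : ℤ)).toNat) = z ^ (i + (N : ℤ)) := by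
        rw [← zpow_natCast, Int.toNat_of_nonneg (hnonneg i hi)]
      rw [hzp, zpow_add₀ hz]; ring
    have h3 : (∑ i ∈ s, c i * z ^ i) = ∑ᶠ i : ℤ, c i * z ^ i := by
      rw [finsum_eq_sum_of_support_subset]
      intro i hi
      simp only [Function.mem_support] at hi
      have : c i ≠ 0 := fun h0 => hi (by rw [h0, zero_mul])
      exact (hmem i).2 this
    rw [h1, Finset.sum_congr rfl h2, ← Finset.sum_mul, h3, h z hz, zero_mul]
  have hinf : ({z : ℂ | z ≠ 0}).Infinite := by
    have he : {z : ℂ | z ≠ 0} = ({0} : Set ℂ)ᶜ := by ext z; simp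
    rw [he]
    exact (Set.finite_singleton (0 : ℂ)).infinite_compl
  have hP0 : P = 0 :=
    Polynomial.eq_zero_of_infinite_isRoot P (hinf.mono fun z hz => hPeval z hz)
  intro i0
  by_cases hi0 : i0 ∈ s
  · have hco := congrArg (fun q : Polynomial ℂ => q.coeff ((i0 + (N : ℤ)).toNat)) hP0
    simp only [hP, Polynomial.finset_sum_coeff, Polynomial.coeff_C_mul,
      Polynomial.coeff_X_pow, Polynomial.coeff_zero] at hco
    rw [Finset.sum_eq_single i0] at hco
    · simpa using hco
    · intro i hi hne
      have hne' : (i0 + (N : ℤ)).toNat ≠ (i + (N : ℤ)).toNat := by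
        have h1 := hnonneg i hi; have h2 := hnonneg i0 hi0; omega
      simp [hne']
    · intro hcon; exact absurd hi0 hcon
  · by_contra hcc
    exact hi0 ((hmem i0).2 hcc)

private lemma maskRel (a b : ℤ → ℂ) (ha : (Function.support a).Finite)
    (hb : (Function.support b).Finite) (r : ℂ)
    (hfact : ∀ z : ℂ, z ≠ 0 → symbolC a z = (1 + r * z) * symbolC b z) :
    ∀ m : ℤ, a m = b m + r * b (m - 1) := by
  have hb' : (Function.support fun i : ℤ => b (i - 1)).Finite := by
    have he : (Function.support fun i : ℤ => b (i - 1))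
        = (fun i : ℤ => i - 1) ⁻¹' Function.support b := rfl
    rw [he]
    exact hb.preimage (fun x _ y _ h => by omega)
  set c : ℤ → ℂ := fun m => a m - (b m + r * b (m - 1)) with hcdef
  have hc : (Function.support c).Finite := by
    apply ((ha.union hb).union hb').subset
    intro m hm
    simp only [Function.mem_support, hcdef, Set.mem_union] at hm ⊢
    by_contra hcon
    push_neg at hcon
    obtain ⟨⟨h1, h2⟩, h3⟩ := hcon
    exact hm (by simp [h1, h2, h3])
  have hz0 : ∀ z : ℂ, z ≠ 0 → (∑ᶠ i : ℤ, c i * z ^ i) = 0 := by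
    intro z hz
    have hsa : (Function.support fun i : ℤ => a i * z ^ i).Finite :=
      ha.subset fun i hi => by
        simp only [Function.mem_support] at hi ⊢
        exact fun h0 => hi (by rw [h0, zero_mul])
    have hsb : (Function.support fun i : ℤ => b i * z ^ i).Finite :=
      hb.subset fun i hi => by
        simp only [Function.mem_support] at hi ⊢
        exact fun h0 => hi (by rw [h0, zero_mul])
    have hsb' : (Function.support fun i : ℤ => r * b (i - 1) * z ^ i).Finite :=
      hb'.subset fun i hi => by
        simp only [Function.mem_support] at hi ⊢
        exact fun h0 => hi (by rw [h0, mul_zero, zero_mul])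
    have hshift : (∑ᶠ i : ℤ, r * b (i - 1) * z ^ i) = (r * z) * symbolC b z := by
      rw [symbolC, mul_finsum _ _]
      rw [← finsum_comp_equiv (Equiv.addRight (1 : ℤ))
        (f := fun i : ℤ => r * b (i - 1) * z ^ i)]
      apply finsum_congr
      intro i
      simp only [Equiv.coe_addRight, add_sub_cancel_right]
      rw [zpow_add₀ hz, zpow_one]
      ring
    have hceq : (fun i : ℤ => c i * z ^ i)
        = fun i : ℤ => a i * z ^ i - (b i * z ^ i + r * b (i - 1) * z ^ i) := by
      funext i; simp only [hcdef]; ring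
    have hsum : (Function.support fun i : ℤ => b i * z ^ i + r * b (i - 1) * z ^ i).Finite := by
      apply (hsb.union hsb').subset
      intro i hi
      simp only [Function.mem_support, Set.mem_union] at hi ⊢
      by_contra hcon
      push_neg at hcon
      obtain ⟨h1, h2⟩ := hcon
      exact hi (by rw [h1, h2, add_zero])
    rw [hceq, finsum_sub_distrib hsa hsum, finsum_add_distrib hsb hsb', hshift]
    show symbolC a z - (symbolC b z + r * z * symbolC b z) = 0
    rw [hfact z hz]
    ring
  intro m
  have := coeffZero c hc hz0 m
  simp only [hcdef] at this
  linear_combination this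

/-- difference-scheme identity: if the symbols of the finitely supported
masks `a` and `b` satisfy `a(z) = (1 + rz) b(z)` with `r ≠ 0`, then for every bounded
sequence `f` and every `i ∈ ℤ`,
`(S_a f)_i − r (S_a f)_{i−1} = (S_b g)_i` where `g_j = f_j − r² f_{j−1}`. -/
theorem difference_scheme_identity
    (a b : ℤ → ℂ) (ha : (Function.support a).Finite) (hb : (Function.support b).Finite)
    (r : ℂ) (hr : r ≠ 0)
    (hfact : ∀ z : ℂ, z ≠ 0 → symbolC a z = (1 + r * z) * symbolC b z) :
    ∀ f : ℤ → ℂ, BddSeqC f → ∀ i : ℤ,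
      subOpCC a f i - r * subOpCC a f (i - 1) =
        subOpCC b (fun j : ℤ => f j - r ^ 2 * f (j - 1)) i:= by
  intro f _ i
  have hab : ∀ m : ℤ, a m = b m + r * b (m - 1) := maskRel a b ha hb r hfact
  have key : ∀ s : ℤ, subOpCC a f s
      = (∑ᶠ j : ℤ, b (s - 2 * j) * f j) + r * ∑ᶠ j : ℤ, b (s - 1 - 2 * j) * f j := by
    intro s
    have h1 : (fun j : ℤ => a (s - 2 * j) * f j)
        = fun j : ℤ => b (s - 2 * j) * f j + r * (b (s - 1 - 2 * j) * f j) := by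
      funext j
      rw [hab (s - 2 * j)]
      have he : s - 2 * j - 1 = s - 1 - 2 * j := by ring
      rw [he]; ring
    have hfin2 : (Function.support fun j : ℤ => r * (b (s - 1 - 2 * j) * f j)).Finite :=
      (suppFinAux b hb (s - 1) f).subset fun j hj => by
        simp only [Function.mem_support] at hj ⊢
        exact fun h0 => hj (by rw [h0, mul_zero])
    rw [subOpCC]
    rw [h1, finsum_add_distrib (suppFinAux b hb s f) hfin2,
      ← mul_finsum _ _]
  rw [key i, key (i - 1)]
  have hB2 : (∑ᶠ j : ℤ, b (i - 1 - 1 - 2 * j) * f j) = ∑ᶠ j : ℤ, b (i - 2 * j) * f (j - 1) := by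
    rw [← finsum_comp_equiv (Equiv.addRight (1 : ℤ))
      (f := fun j : ℤ => b (i - 2 * j) * f (j - 1))]
    apply finsum_congr
    intro j
    simp only [Equiv.coe_addRight, add_sub_cancel_right]
    have he : i - 2 * (j + 1) = i - 1 - 1 - 2 * j := by ring
    rw [he]
  have hrhs : subOpCC b (fun j : ℤ => f j - r ^ 2 * f (j - 1)) i
      = (∑ᶠ j : ℤ, b (i - 2 * j) * f j) - r ^ 2 * ∑ᶠ j : ℤ, b (i - 2 * j) * f (j - 1) := by
    rw [subOpCC]
    have h1 : (fun j : ℤ => b (i - 2 * j) * (f j - r ^ 2 * f (j - 1)))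
        = fun j : ℤ => b (i - 2 * j) * f j - r ^ 2 * (b (i - 2 * j) * f (j - 1)) := by
      funext j; ring
    have hfin2 : (Function.support fun j : ℤ => r ^ 2 * (b (i - 2 * j) * f (j - 1))).Finite :=
      (suppFinAux b hb i (fun j => f (j - 1))).subset fun j hj => by
        simp only [Function.mem_support] at hj ⊢
        exact fun h0 => hj (by rw [h0, mul_zero])
    rw [h1, finsum_sub_distrib (suppFinAux b hb i f) hfin2,
      ← mul_finsum _ _]
  rw [hrhs, ← hB2]
  ring


end
end

section
/- For every real r > 0, define b₁ = −(4r⁴ + 6r³ + 9r² + 6r + 4)/(2(r⁴ + 2r³ + 2r² + 2r + 1)), b₂ = (2r² + r + 2)/(2(r² + 1)), b₃ = −r(2r² + r + 2)/(2(r² + 1)(r+1)²), and let a(z) = (1+z)²(z+r)(z+r^{−1})(1 + b₁z + b₂z² + b₃z³). Then a(1) = 2, a'(1) = 0, a(r) = 2 and a(r^{−1}) = 2; equivalently, the Laurent polynomial 2 − a(z) is divisible by (1−z)²(1−rz)(1−r^{−1}z). (These are the algebraic conditions expressing that the non-symmetric primal scheme with k-level symbol a^{[k]} obtained by taking r = r_k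 = e^{λ2^{−k−1}} reproduces Φ₄ = span{1, x, e^{λx}, e^{−λx}} with respect to the primal parametrization t_i^{[k]} = i/2^k.) -/
noncomputable section

set_option maxHeartbeats 1000000 in
/-- Remark 2.6, primal example: for every real `r > 0`, the polynomial
`a(z) = (1+z)²(z+r)(z+r⁻¹)(1 + b₁z + b₂z² + b₃z³)` with
`b₁ = −(4r⁴+6r³+9r²+6r+4)/(2(r⁴+2r³+2r²+2r+1))`, `b₂ = (2r²+r+2)/(2(r²+1))`,
`b₃ = −r(2r²+r+2)/(2(r²+1)(r+1)²)` satisfies `a(1) = 2`, `a'(1) = 0`, `a(r) = 2`,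
`a(r⁻¹) = 2`; equivalently `2 − a(z)` is divisible by `(1−z)²(1−rz)(1−r⁻¹z)`. -/
theorem primal_scheme_reproduction_conditions (r : ℝ) (hr : 0 < r) :
    let b₁ : ℂ := -((4 * (r : ℂ) ^ 4 + 6 * (r : ℂ) ^ 3 + 9 * (r : ℂ) ^ 2 + 6 * (r : ℂ) + 4) /
      (2 * ((r : ℂ) ^ 4 + 2 * (r : ℂ) ^ 3 + 2 * (r : ℂ) ^ 2 + 2 * (r : ℂ) + 1)))
    let b₂ : ℂ := (2 * (r : ℂ) ^ 2 + (r : ℂ) + 2) / (2 * ((r : ℂ) ^ 2 + 1))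
    let b₃ : ℂ := -((r : ℂ) * (2 * (r : ℂ) ^ 2 + (r : ℂ) + 2) /
      (2 * ((r : ℂ) ^ 2 + 1) * ((r : ℂ) + 1) ^ 2))
    let a : ℂ → ℂ := fun z =>
      (1 + z) ^ 2 * (z + (r : ℂ)) * (z + (r : ℂ)⁻¹) *
        (1 + b₁ * z + b₂ * z ^ 2 + b₃ * z ^ 3)
    a 1 = 2 ∧ deriv a 1 = 0 ∧ a (r : ℂ) = 2 ∧ a ((r : ℂ)⁻¹) = 2 ∧
      ∃ c : Polynomial ℂ, ∀ z : ℂ,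
        2 - a z = (1 - z) ^ 2 * (1 - (r : ℂ) * z) * (1 - (r : ℂ)⁻¹ * z) * c.eval z := by
  intro b₁ b₂ b₃ a
  have hR0 : (r : ℂ) ≠ 0 := by
    simp [Complex.ofReal_ne_zero, hr.ne']
  have hR1 : ((r : ℂ) + 1) ≠ 0 := by
    have : ((r + 1 : ℝ) : ℂ) ≠ 0 := by
      simp only [Complex.ofReal_ne_zero]; positivity
    simpa using this
  have hR2 : ((r : ℂ) ^ 2 + 1) ≠ 0 := by
    have : ((r ^ 2 + 1 : ℝ) : ℂ) ≠ 0 := by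
      simp only [Complex.ofReal_ne_zero]; positivity
    simpa using this
  have h1 : (((r : ℂ) + 1) ^ 2 : ℂ) ≠ 0 := pow_ne_zero 2 hR1
  have hD : (2 * (((r : ℂ) ^ 2 + 1) * ((r : ℂ) + 1) ^ 2) : ℂ) ≠ 0 :=
    mul_ne_zero two_ne_zero (mul_ne_zero hR2 h1)
  -- division-free characterizations of the coefficients
  have hb1 : b₁ * (2 * (((r : ℂ) ^ 2 + 1) * ((r : ℂ) + 1) ^ 2)) =
      -(4 * (r : ℂ) ^ 4 + 6 * (r : ℂ) ^ 3 + 9 * (r : ℂ) ^ 2 + 6 * (r : ℂ) + 4) := by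
    simp only [b₁]
    rw [show ((r : ℂ) ^ 4 + 2 * (r : ℂ) ^ 3 + 2 * (r : ℂ) ^ 2 + 2 * (r : ℂ) + 1)
        = (((r : ℂ) ^ 2 + 1) * ((r : ℂ) + 1) ^ 2) from by ring]
    field_simp
  have hb2 : b₂ * (2 * ((r : ℂ) ^ 2 + 1)) = 2 * (r : ℂ) ^ 2 + (r : ℂ) + 2 := by
    simp only [b₂]
    field_simp
  have hb3 : b₃ * (2 * (((r : ℂ) ^ 2 + 1) * ((r : ℂ) + 1) ^ 2)) =
      -((r : ℂ) * (2 * (r : ℂ) ^ 2 + (r : ℂ) + 2)) := by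
    have hD' : (2 * ((r : ℂ) ^ 2 + 1) * ((r : ℂ) + 1) ^ 2 : ℂ) ≠ 0 :=
      mul_ne_zero (mul_ne_zero two_ne_zero hR2) h1
    simp only [b₃]
    rw [show (2 * (((r : ℂ) ^ 2 + 1) * ((r : ℂ) + 1) ^ 2) : ℂ)
        = 2 * ((r : ℂ) ^ 2 + 1) * ((r : ℂ) + 1) ^ 2 from by ring]
    rw [neg_mul, div_mul_cancel₀ _ hD']
  have hI : (r : ℂ) * (r : ℂ)⁻¹ = 1 := mul_inv_cancel₀ hR0
  -- the quotient polynomial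
  set c : Polynomial ℂ :=
      Polynomial.C 1 + Polynomial.C (-b₁) * Polynomial.X +
      Polynomial.C b₂ * Polynomial.X ^ 2 + Polynomial.C (-b₃) * Polynomial.X ^ 3 with hc
  have hceval : ∀ z : ℂ, c.eval z = 1 + (-b₁) * z + b₂ * z ^ 2 + (-b₃) * z ^ 3 := by
    intro z
    simp [hc]
  have key : ∀ z : ℂ,
      2 - a z = (1 - z) ^ 2 * (1 - (r : ℂ) * z) * (1 - (r : ℂ)⁻¹ * z) * c.eval z := by
    intro z
    rw [hceval z]
    show 2 - (1 + z) ^ 2 * (z + (r : ℂ)) * (z + (r : ℂ)⁻¹) *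
        (1 + b₁ * z + b₂ * z ^ 2 + b₃ * z ^ 3)
      = (1 - z) ^ 2 * (1 - (r : ℂ) * z) * (1 - (r : ℂ)⁻¹ * z) *
        (1 + (-b₁) * z + b₂ * z ^ 2 + (-b₃) * z ^ 3)
    refine mul_left_cancel₀ (mul_ne_zero hR0 hD) ?_
    linear_combination
      (-((1 + z) ^ 2 * (z + (r : ℂ)) *
          ((2 * (((r : ℂ) ^ 2 + 1) * ((r : ℂ) + 1) ^ 2)) *
            (1 + b₁ * z + b₂ * z ^ 2 + b₃ * z ^ 3)))) * hI
      + (-((1 + z) ^ 2 * (z + (r : ℂ)) * ((r : ℂ) * z + 1))) *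
          (z * hb1 + ((r : ℂ) + 1) ^ 2 * z ^ 2 * hb2 + z ^ 3 * hb3)
      + ((1 - z) ^ 2 * (1 - (r : ℂ) * z) *
          ((2 * (((r : ℂ) ^ 2 + 1) * ((r : ℂ) + 1) ^ 2)) *
            (1 + (-b₁) * z + b₂ * z ^ 2 + (-b₃) * z ^ 3))) * (z * hI)
      + ((1 - z) ^ 2 * (1 - (r : ℂ) * z) * ((r : ℂ) - z)) *
          (z * hb1 - ((r : ℂ) + 1) ^ 2 * z ^ 2 * hb2 + z ^ 3 * hb3)
  have ha : a = fun z => 2 - (1 - z) ^ 2 * ((1 - (r : ℂ) * z) * (1 - (r : ℂ)⁻¹ * z) * c.eval z) := by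
    funext z
    linear_combination -(key z)
  have ha1 : a 1 = 2 := by
    have h := key 1
    have : (1 - (1 : ℂ)) ^ 2 = 0 := by norm_num
    rw [this] at h
    linear_combination -h
  have haR : a (r : ℂ) = 2 := by
    have h := key (r : ℂ)
    rw [inv_mul_cancel₀ hR0] at h
    simp only [sub_self, mul_zero, zero_mul] at h
    linear_combination -h
  have haRi : a ((r : ℂ)⁻¹) = 2 := by
    have h := key ((r : ℂ)⁻¹)
    rw [mul_inv_cancel₀ hR0] at h
    simp only [sub_self, mul_zero, zero_mul] at h
    linear_combination -h
  have hderiv : deriv a 1 = 0 := by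
    rw [ha]
    set g : ℂ → ℂ := fun z => (1 - (r : ℂ) * z) * (1 - (r : ℂ)⁻¹ * z) * c.eval z with hgdef
    have hg : DifferentiableAt ℂ g 1 := by
      apply DifferentiableAt.mul
      apply DifferentiableAt.mul
      · exact ((differentiable_const _).sub (differentiable_id.const_mul _)).differentiableAt
      · exact ((differentiable_const _).sub (differentiable_id.const_mul _)).differentiableAt
      · exact (Polynomial.differentiable c).differentiableAt
    have hg' : HasDerivAt g (deriv g 1) 1 := hg.hasDerivAt
    have hf : HasDerivAt (fun z : ℂ => (1 - z) ^ 2) 0 1 := by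
      have h := ((hasDerivAt_id (1 : ℂ)).const_sub 1).fun_pow 2
      simpa using h
    have hprod : HasDerivAt (fun z : ℂ => (1 - z) ^ 2 * g z)
        (0 * g 1 + (1 - 1) ^ 2 * deriv g 1) 1 := hf.mul hg'
    have htot : HasDerivAt (fun z : ℂ => 2 - (1 - z) ^ 2 * g z)
        (-(0 * g 1 + (1 - 1) ^ 2 * deriv g 1)) 1 := hprod.const_sub 2
    have := htot.deriv
    simpa using this
  exact ⟨ha1, hderiv, haR, haRi, c, key⟩

end
end
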